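/- arXiv:1912.06771 — 5 statements merged into one kernel-verified Lean document; each statement's English description precedes it below -/
import Mathlib

section
/- Conversely, for every x ∈ ℂ with x ≠ ±1/√d that solves one of the h+1 equations d^{h+1}x^{2h+2} = 1 or d^{k+2}x^{2k+4} − d^{k+2}x^{2k+3} + dx − 1 = 0 (0 ≤ k ≤ h−1), the number λ = (d/(d+1))·(x + 1/(xd)) is an eigenvalue of Q_h. Moreover, for each of these equations, if x is a solution then so is 1/(xd), and x and 1/(xd) yield the same value of λ. -/
open Matrix

/-- Vertices of the complete `d`-ary tree of height `h`: words over `{0,…,d-1}`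
of length at most `h` (encoded as a level `l ≤ h` together with a word of length `l`). -/
abbrev Vtx (d h : ℕ) : Type := Σ l : Fin (h + 1), Fin l.val → Fin d

/-- The word (from the root) corresponding to a vertex. -/
def toWord {d h : ℕ} (v : Vtx d h) : List (Fin d) := List.ofFn v.2

/-- The level of a vertex, i.e. its distance from the root. -/
def lvl {d h : ℕ} (v : Vtx d h) : ℕ := v.1.val

/-- Adjacency in the tree: one vertex is obtained from the other by appending one letter. -/
def adj {d h : ℕ} (v w : Vtx d h) : Prop :=
  (∃ a : Fin d, toWord w = toWord v ++ [a]) ∨ ∃ a : Fin d, toWord v = toWord w ++ [a]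

-- The transition matrix of the simple random walk on the complete `d`-ary tree.
open scoped Classical in
noncomputable def Q (d h : ℕ) : Matrix (Vtx d h) (Vtx d h) ℂ := fun v w =>
  if adj v w then 1 / (d + 1)
  else if v = w ∧ lvl v = 0 then 1 / (d + 1)
  else if v = w ∧ lvl v = h then (d : ℂ) / (d + 1)
  else 0

/-- `inSub v c w` means that `w` belongs to the complete subtree `T_c^v` rooted at the
child of `v` labelled `c`. -/
def inSub {d h : ℕ} (v : Vtx d h) (c : Fin d) (w : Vtx d h) : Prop :=
  (toWord v ++ [c]) <+: toWord w

/-! With `y = 1/(x d)` we have `d x y = 1`, so `x` and `y` are the roots of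
`d t² - d (x + y) t + 1` and every `φ j = A xʲ + B yʲ` satisfies
`d φ (j + 2) + φ j = d (x + y) φ (j + 1)`: this is the eigenvalue equation of `Q` for
`λ = d (x + y) / (d + 1)` at an inner vertex, for vectors given by `φ` of the level.
If `d^(h+1) x^(2h+2) = 1` then `x^(h+1) = y^(h+1)`, and `φ j = (1 - y) x^(j+1) - (1 - x) y^(j+1)`
also satisfies the boundary equations at the root and at the leaves.
The `k`-th equation says that `φ j = xʲ - yʲ` satisfies `φ (k + 2) = φ (k + 1)`. Since `φ 0 = 0`,
`φ` of the depth below a vertex `u` of level `h - k - 1`, put with opposite signs on the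
subtrees of two children of `u`, is an eigenvector: the two contributions at `u` cancel.
Finally `x ≠ ±1/√d` means `x ≠ y`, which makes these vectors nonzero. -/

namespace CompleteTree

variable {d h : ℕ}

lemma length_toWord (v : Vtx d h) : (toWord v).length = lvl v := by
  simp [toWord, lvl]

lemma lvl_le (v : Vtx d h) : lvl v ≤ h := Nat.lt_succ_iff.mp v.1.isLt

lemma toWord_injective : Function.Injective (toWord (d := d) (h := h)) := by
  rintro ⟨⟨l, hl⟩, f⟩ ⟨⟨l', hl'⟩, f'⟩ hw
  obtain rfl : l = l' := by simpa [toWord] using congrArg List.length hw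
  obtain rfl := List.ofFn_inj.mp hw
  rfl

def ofWord (w : List (Fin d)) (hw : w.length ≤ h) : Vtx d h :=
  ⟨⟨w.length, Nat.lt_succ_of_le hw⟩, w.get⟩

@[simp]
lemma toWord_ofWord (w : List (Fin d)) (hw : w.length ≤ h) : toWord (ofWord w hw) = w :=
  List.ofFn_get w

@[simp]
lemma lvl_ofWord (w : List (Fin d)) (hw : w.length ≤ h) : lvl (ofWord w hw) = w.length := rfl

/- Leaves are their own children and the root is its own parent: this accounts for the
self-loops of `Q` (see `add_one_mul_mulVec_Q_apply`). -/
def child (v : Vtx d h) (a : Fin d) : Vtx d h :=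
  if hv : lvl v < h then ofWord (toWord v ++ [a]) (by simpa [length_toWord] using hv) else v

def parent (v : Vtx d h) : Vtx d h :=
  ofWord (toWord v).dropLast (by simpa [length_toWord] using (lvl_le v).trans' (Nat.sub_le _ 1))

lemma toWord_child {v : Vtx d h} (hv : lvl v < h) (a : Fin d) :
    toWord (child v a) = toWord v ++ [a] := by
  simp [child, hv]

lemma child_of_lvl_eq {v : Vtx d h} (hv : lvl v = h) (a : Fin d) : child v a = v := by
  simp [child, hv]

lemma lvl_child (v : Vtx d h) (a : Fin d) : lvl (child v a) = min (lvl v + 1) h := by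
  by_cases hv : lvl v < h
  · simp [child, hv, length_toWord]
  · simp [child, hv]; have := lvl_le v; omega

@[simp]
lemma toWord_parent (v : Vtx d h) : toWord (parent v) = (toWord v).dropLast := by
  simp [parent]

@[simp]
lemma lvl_parent (v : Vtx d h) : lvl (parent v) = lvl v - 1 := by
  simp [parent, length_toWord]

lemma child_parent (v : Vtx d h) (h0 : 0 < lvl v) :
    ∃ a, child (parent v) a = v := by
  have hne : toWord v ≠ [] := by simp [← List.length_pos_iff, length_toWord, h0]
  refine ⟨(toWord v).getLast hne, toWord_injective ?_⟩
  rw [toWord_child (by simp; have := lvl_le v; omega), toWord_parent,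
    List.dropLast_append_getLast]

lemma child_eq_self_iff (v : Vtx d h) (a : Fin d) : child v a = v ↔ lvl v = h := by
  refine ⟨fun e => ?_, fun hv => child_of_lvl_eq hv a⟩
  have := congrArg lvl e
  rw [lvl_child] at this
  omega

lemma parent_eq_self_iff (v : Vtx d h) : parent v = v ↔ lvl v = 0 := by
  refine ⟨fun e => by have := congrArg lvl e; simp at this; omega, fun hv => toWord_injective ?_⟩
  rw [← length_toWord, List.length_eq_zero_iff] at hv
  simp [hv]

lemma child_eq_iff_of_ne {v w : Vtx d h} (hvw : v ≠ w) (a : Fin d) :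
    child v a = w ↔ toWord w = toWord v ++ [a] := by
  by_cases hv : lvl v < h
  · rw [← toWord_child hv, eq_comm, toWord_injective.eq_iff]
  · refine iff_of_false (by rwa [child_of_lvl_eq (by have := lvl_le v; omega)]) fun e => ?_
    have := congrArg List.length e
    simp only [length_toWord, List.length_append, List.length_singleton] at this
    have := lvl_le w
    omega

lemma parent_eq_iff_of_ne {v w : Vtx d h} (hvw : v ≠ w) :
    parent v = w ↔ ∃ a, toWord v = toWord w ++ [a] := by
  constructor
  · rintro rfl
    have h0 : 0 < lvl v := Nat.pos_of_ne_zero fun h0 => hvw ((parent_eq_self_iff v).2 h0).symm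
    obtain ⟨a, ha⟩ := child_parent v h0
    refine ⟨a, ?_⟩
    conv_lhs => rw [← ha]
    rw [toWord_child (by simp; have := lvl_le v; omega)]
  · rintro ⟨a, ha⟩
    exact toWord_injective (by simp [ha])

lemma not_adj_self (v : Vtx d h) : ¬adj v v := by
  rintro (⟨a, ha⟩ | ⟨a, ha⟩) <;> simpa using congrArg List.length ha

lemma sum_ite_toWord_eq_append (v w : Vtx d h) :
    (∑ a : Fin d, if toWord w = toWord v ++ [a] then (1 : ℂ) else 0) =
      if ∃ a, toWord w = toWord v ++ [a] then 1 else 0 := by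
  split_ifs with hc
  · obtain ⟨a, ha⟩ := hc
    rw [Finset.sum_eq_single a (fun b _ hb => if_neg fun e => hb (by simpa [ha] using e.symm))
      (by simp), if_pos ha]
  · exact Finset.sum_eq_zero fun a _ => if_neg fun e => hc ⟨a, e⟩

lemma add_one_mul_Q_apply (hh : 1 ≤ h) (v w : Vtx d h) :
    ((d : ℂ) + 1) * Q d h v w =
      (∑ a, if child v a = w then 1 else 0) + if parent v = w then 1 else 0 := by
  have hd : (d : ℂ) + 1 ≠ 0 := by exact_mod_cast Nat.succ_ne_zero d
  by_cases hvw : v = w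
  · subst hvw
    simp only [Q, if_neg (not_adj_self v), true_and, child_eq_self_iff, parent_eq_self_iff,
      Finset.sum_ite_irrel, Finset.sum_const, Finset.card_univ, Fintype.card_fin]
    split_ifs <;> first | omega | (field_simp; simp)
  · have hexcl : ¬((∃ a, toWord w = toWord v ++ [a]) ∧ ∃ a, toWord v = toWord w ++ [a]) := by
      rintro ⟨⟨a, ha⟩, ⟨b, hb⟩⟩
      simpa using congrArg List.length (ha.trans (congrArg (· ++ [a]) hb))
    simp only [Q, adj, hvw, false_and, if_false, child_eq_iff_of_ne hvw, parent_eq_iff_of_ne hvw,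
      sum_ite_toWord_eq_append]
    split_ifs <;> first | tauto | (field_simp; simp)

lemma add_one_mul_mulVec_Q_apply (hh : 1 ≤ h) (f : Vtx d h → ℂ) (v : Vtx d h) :
    ((d : ℂ) + 1) * (Q d h *ᵥ f) v = ∑ a, f (child v a) + f (parent v) := by
  simp only [mulVec, dotProduct, Finset.mul_sum, ← mul_assoc, add_one_mul_Q_apply hh, add_mul,
    Finset.sum_add_distrib, Finset.sum_mul, ite_mul, one_mul, zero_mul]
  rw [Finset.sum_comm]
  simp

lemma hasEigenvalue_Q {f : Vtx d h → ℂ} {μ : ℂ} (hf : f ≠ 0)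
    (hμ : ∀ v, ((d : ℂ) + 1) * (Q d h *ᵥ f) v = μ * f v) :
    Module.End.HasEigenvalue (toLin' (Q d h)) (μ / (d + 1)) := by
  have hd : (d : ℂ) + 1 ≠ 0 := by exact_mod_cast Nat.succ_ne_zero d
  refine Module.End.hasEigenvalue_of_hasEigenvector ⟨?_, hf⟩
  rw [Module.End.mem_eigenspace_iff, toLin'_apply]
  ext v
  rw [Pi.smul_apply, smul_eq_mul, div_mul_eq_mul_div, eq_div_iff hd, mul_comm, hμ]

lemma add_one_mul_mulVec_Q_comp_lvl (hh : 1 ≤ h) {φ : ℕ → ℂ} {μ : ℂ}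
    (hrec : ∀ j, d * φ (j + 2) + φ j = μ * φ (j + 1)) (hroot : d * φ 1 + φ 0 = μ * φ 0)
    (hleaf : φ (h + 1) = φ h) (v : Vtx d h) :
    ((d : ℂ) + 1) * (Q d h *ᵥ fun w => φ (lvl w)) v = μ * φ (lvl v) := by
  have hchild : ∀ a, φ (lvl (child v a)) = φ (lvl v + 1) := by
    intro a
    rw [lvl_child]
    rcases (lvl_le v).lt_or_eq with hv | hv
    · rw [min_eq_left hv]
    · rw [hv, min_eq_right (Nat.le_succ h), hleaf]
  rw [add_one_mul_mulVec_Q_apply hh, Finset.sum_congr rfl fun a _ => hchild a, lvl_parent]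
  simp only [Finset.sum_const, Finset.card_univ, Fintype.card_fin, nsmul_eq_mul]
  rcases lvl v with _ | j
  · simpa using hroot
  · simpa using hrec j

lemma lvl_lt_of_inSub {u w : Vtx d h} {c : Fin d} (hw : inSub u c w) : lvl u < lvl w := by
  simpa [length_toWord] using hw.length_le

lemma inSub_child_iff {u : Vtx d h} (hu : lvl u < h) (c : Fin d) (v : Vtx d h) (a : Fin d) :
    inSub u c (child v a) ↔ inSub u c v ∨ (v = u ∧ a = c) := by
  by_cases hv : lvl v < h
  · rw [inSub, toWord_child hv, List.prefix_concat_iff]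
    simp [toWord_injective.eq_iff, eq_comm, or_comm, inSub]
  · have hvu : v ≠ u := by rintro rfl; exact hv hu
    rw [child_of_lvl_eq (by have := lvl_le v; omega)]
    simp [hvu]

lemma inSub_of_inSub_parent {u v : Vtx d h} {c : Fin d} (hv : inSub u c (parent v)) :
    inSub u c v := by
  unfold inSub at hv ⊢
  rw [toWord_parent] at hv
  exact hv.trans (List.dropLast_prefix _)

lemma inSub_parent_or_eq {u v : Vtx d h} {c : Fin d} (hu : lvl u < h) (hv : inSub u c v) :
    inSub u c (parent v) ∨ parent v = u := by
  obtain ⟨a, ha⟩ := child_parent v ((Nat.zero_le _).trans_lt (lvl_lt_of_inSub hv))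
  rw [← ha, inSub_child_iff hu] at hv
  exact hv.imp_right And.left

open scoped Classical in
noncomputable def subtreeFun (u : Vtx d h) (c : Fin d) (φ : ℕ → ℂ) (w : Vtx d h) : ℂ :=
  if inSub u c w then φ (lvl w - lvl u) else 0

lemma add_one_mul_mulVec_Q_subtreeFun (hh : 1 ≤ h) {u : Vtx d h} (hu : lvl u < h) (c : Fin d)
    {φ : ℕ → ℂ} {μ : ℂ} (hrec : ∀ j, d * φ (j + 2) + φ j = μ * φ (j + 1)) (h0 : φ 0 = 0)
    (hleaf : φ (h + 1 - lvl u) = φ (h - lvl u)) (v : Vtx d h) :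
    ((d : ℂ) + 1) * (Q d h *ᵥ subtreeFun u c φ) v =
      μ * subtreeFun u c φ v + if v = u then φ 1 else 0 := by
  rw [add_one_mul_mulVec_Q_apply hh]
  by_cases hv : inSub u c v
  · have hvu := lvl_lt_of_inSub hv
    have hchild : ∀ a, subtreeFun u c φ (child v a) = φ (lvl v + 1 - lvl u) := by
      intro a
      rw [subtreeFun, if_pos ((inSub_child_iff hu c v a).2 (Or.inl hv)), lvl_child]
      rcases (lvl_le v).lt_or_eq with hlt | heq
      · rw [min_eq_left hlt]
      · rw [heq, min_eq_right (Nat.le_succ h), hleaf]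
    have hparent : subtreeFun u c φ (parent v) = φ (lvl v - 1 - lvl u) := by
      rcases inSub_parent_or_eq hu hv with hp | hp
      · rw [subtreeFun, if_pos hp, lvl_parent]
      · have := congrArg lvl hp
        rw [lvl_parent] at this
        rw [hp, subtreeFun, if_neg fun hu' => (lvl_lt_of_inSub hu').false,
          show lvl v - 1 - lvl u = 0 by omega, h0]
    obtain ⟨j, hj⟩ : ∃ j, lvl v - lvl u = j + 1 := ⟨lvl v - lvl u - 1, by omega⟩
    rw [Finset.sum_congr rfl fun a _ => hchild a, hparent, subtreeFun, if_pos hv,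
      if_neg (by rintro rfl; exact hvu.false), show lvl v + 1 - lvl u = j + 2 by omega,
      show lvl v - 1 - lvl u = j by omega, hj]
    simp only [Finset.sum_const, Finset.card_univ, Fintype.card_fin, nsmul_eq_mul, add_zero]
    exact hrec j
  · have hchild : ∀ a, subtreeFun u c φ (child v a) = if v = u ∧ a = c then φ 1 else 0 := by
      intro a
      unfold subtreeFun
      rw [inSub_child_iff hu, or_iff_right hv]
      split_ifs with hva
      · rw [hva.1, lvl_child, min_eq_left hu, Nat.add_sub_cancel_left]
      · rfl
    rw [Finset.sum_congr rfl fun a _ => hchild a]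
    simp only [subtreeFun, if_neg hv, if_neg (mt inSub_of_inSub_parent hv)]
    by_cases hvu : v = u <;> simp [hvu]

lemma hasEigenvalue_Q_of_radial (hh : 1 ≤ h) {φ : ℕ → ℂ} {μ : ℂ}
    (hrec : ∀ j, d * φ (j + 2) + φ j = μ * φ (j + 1)) (hroot : d * φ 1 + φ 0 = μ * φ 0)
    (hleaf : φ (h + 1) = φ h) (hφ : φ 0 ≠ 0) :
    Module.End.HasEigenvalue (toLin' (Q d h)) (μ / (d + 1)) := by
  refine hasEigenvalue_Q (fun hf => hφ ?_) (add_one_mul_mulVec_Q_comp_lvl hh hrec hroot hleaf)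
  simpa using congrFun hf (ofWord [] (Nat.zero_le h))

lemma hasEigenvalue_Q_of_subtree (hh : 1 ≤ h) {u : Vtx d h} (hu : lvl u < h) {c₀ c₁ : Fin d}
    (hc : c₀ ≠ c₁) {φ : ℕ → ℂ} {μ : ℂ} (hrec : ∀ j, d * φ (j + 2) + φ j = μ * φ (j + 1))
    (h0 : φ 0 = 0) (hleaf : φ (h + 1 - lvl u) = φ (h - lvl u)) (hφ : φ 1 ≠ 0) :
    Module.End.HasEigenvalue (toLin' (Q d h)) (μ / (d + 1)) := by
  refine hasEigenvalue_Q (f := subtreeFun u c₀ φ - subtreeFun u c₁ φ) (fun hf => hφ ?_)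
    fun v => ?_
  · have h₀ : inSub u c₀ (child u c₀) := (inSub_child_iff hu _ _ _).2 (Or.inr ⟨rfl, rfl⟩)
    have h₁ : ¬inSub u c₁ (child u c₀) := by
      rw [inSub_child_iff hu]
      rintro (h | ⟨-, h⟩)
      exacts [(lvl_lt_of_inSub h).false, hc h]
    have hl : lvl (child u c₀) - lvl u = 1 := by rw [lvl_child]; omega
    simpa [subtreeFun, h₀, h₁, hl] using congrFun hf (child u c₀)
  · rw [mulVec_sub, Pi.sub_apply, mul_sub, Pi.sub_apply, mul_sub,
      add_one_mul_mulVec_Q_subtreeFun hh hu c₀ hrec h0 hleaf,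
      add_one_mul_mulVec_Q_subtreeFun hh hu c₁ hrec h0 hleaf]
    ring

end CompleteTree

section Roots

variable {d x y : ℂ}

lemma pow_eq_pow_iff_of_mul_eq_one (hxy : d * x * y = 1) (n : ℕ) :
    d ^ (n + 1) * x ^ (2 * n + 2) = 1 ↔ x ^ (n + 1) = y ^ (n + 1) := by
  have hp : (d * x * y) ^ (n + 1) = 1 := by rw [hxy, one_pow]
  have hdx : (d * x) ^ (n + 1) ≠ 0 := pow_ne_zero _ (left_ne_zero_of_mul_eq_one hxy)
  constructor
  · intro e
    refine mul_left_cancel₀ hdx ?_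
    linear_combination e - hp
  · intro e
    linear_combination (d * x) ^ (n + 1) * e + hp

lemma branch_eq_zero_iff_of_mul_eq_one (hxy : d * x * y = 1) (k : ℕ) :
    d ^ (k + 2) * x ^ (2 * k + 4) - d ^ (k + 2) * x ^ (2 * k + 3) + d * x - 1 = 0 ↔
      x ^ (k + 2) - y ^ (k + 2) = x ^ (k + 1) - y ^ (k + 1) := by
  have hp₁ : (d * x * y) ^ (k + 1) = 1 := by rw [hxy, one_pow]
  have hp₂ : (d * x * y) ^ (k + 2) = 1 := by rw [hxy, one_pow]
  have hdx : (d * x) ^ (k + 2) ≠ 0 := pow_ne_zero _ (left_ne_zero_of_mul_eq_one hxy)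
  constructor
  · intro e
    refine mul_left_cancel₀ hdx ?_
    linear_combination e - hp₂ + d * x * hp₁
  · intro e
    linear_combination (d * x) ^ (k + 2) * e + hp₂ - d * x * hp₁

end Roots

lemma natCast_mul_sq_ne_one {d : ℕ} {x : ℂ} (hx1 : x ≠ ((Real.sqrt d : ℝ) : ℂ)⁻¹)
    (hx2 : x ≠ -((Real.sqrt d : ℝ) : ℂ)⁻¹) : (d : ℂ) * x ^ 2 ≠ 1 := by
  intro e
  have hd : (d : ℂ) ≠ 0 := left_ne_zero_of_mul_eq_one e
  have hsq : x ^ 2 = (((Real.sqrt d : ℝ) : ℂ)⁻¹) ^ 2 := by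
    rw [inv_pow, ← Complex.ofReal_pow, Real.sq_sqrt (Nat.cast_nonneg d), Complex.ofReal_natCast]
    field_simp
    linear_combination e
  rcases sq_eq_sq_iff_eq_or_eq_neg.1 hsq with h | h
  exacts [hx1 h, hx2 h]

namespace CompleteTree

variable {d h : ℕ}

lemma hasEigenvalue_Q_of_pow_eq_pow (hh : 1 ≤ h) {x y : ℂ} (hxy : d * x * y = 1) (hne : x ≠ y)
    (hpow : x ^ (h + 1) = y ^ (h + 1)) :
    Module.End.HasEigenvalue (toLin' (Q d h)) (d * (x + y) / (d + 1)) :=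
  hasEigenvalue_Q_of_radial (φ := fun j => (1 - y) * x ^ (j + 1) - (1 - x) * y ^ (j + 1)) hh
    (fun j => by linear_combination (-((1 - y) * x ^ (j + 1) - (1 - x) * y ^ (j + 1))) * hxy)
    (by linear_combination (y - x) * hxy) (by linear_combination (-(x - 1) * (y - 1)) * hpow)
    (fun e => hne (by linear_combination e))

lemma hasEigenvalue_Q_of_branch (hd : 2 ≤ d) (hh : 1 ≤ h) {x y : ℂ} (hxy : d * x * y = 1)
    (hne : x ≠ y) {k : ℕ} (hk : k < h)
    (hleaf : x ^ (k + 2) - y ^ (k + 2) = x ^ (k + 1) - y ^ (k + 1)) :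
    Module.End.HasEigenvalue (toLin' (Q d h)) (d * (x + y) / (d + 1)) := by
  set u : Vtx d h := ofWord (List.replicate (h - k - 1) ⟨0, by omega⟩) (by simp; omega)
  have hu : lvl u = h - k - 1 := by simp [u]
  refine hasEigenvalue_Q_of_subtree (u := u) (c₀ := ⟨0, by omega⟩) (c₁ := ⟨1, hd⟩)
    (φ := fun j => x ^ j - y ^ j) hh (by omega) (by simp)
    (fun j => by linear_combination (-(x ^ j - y ^ j)) * hxy) (by simp) ?_
    (by simpa [sub_eq_zero] using hne)
  rw [hu, show h + 1 - (h - k - 1) = k + 2 by omega, show h - (h - k - 1) = k + 1 by omega]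
  exact hleaf

end CompleteTree

open CompleteTree

/-- Conversely, each solution x ≠ ±1/√d of one of the h+1 equations gives an eigenvalue
λ = (d/(d+1))(x + 1/(xd)) of `Q d h`; moreover each equation is stable under
x ↦ 1/(xd) and both x and 1/(xd) give the same λ. -/
theorem stmt_2 (d h : ℕ) (hd : 2 ≤ d) (hh : 1 ≤ h) (x : ℂ)
    (hx1 : x ≠ ((Real.sqrt d : ℝ) : ℂ)⁻¹) (hx2 : x ≠ -((Real.sqrt d : ℝ) : ℂ)⁻¹)
    (hsol : (d : ℂ) ^ (h + 1) * x ^ (2 * h + 2) = 1 ∨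
      ∃ k, k ≤ h - 1 ∧
        (d : ℂ) ^ (k + 2) * x ^ (2 * k + 4) - (d : ℂ) ^ (k + 2) * x ^ (2 * k + 3)
          + d * x - 1 = 0) :
    Module.End.HasEigenvalue (Matrix.toLin' (Q d h))
      (((d : ℂ) / (d + 1)) * (x + 1 / (x * d))) ∧
    ((d : ℂ) ^ (h + 1) * x ^ (2 * h + 2) = 1 →
      (d : ℂ) ^ (h + 1) * (1 / (x * d)) ^ (2 * h + 2) = 1) ∧
    (∀ k, k ≤ h - 1 →
      (d : ℂ) ^ (k + 2) * x ^ (2 * k + 4) - (d : ℂ) ^ (k + 2) * x ^ (2 * k + 3)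
        + d * x - 1 = 0 →
      (d : ℂ) ^ (k + 2) * (1 / (x * d)) ^ (2 * k + 4)
        - (d : ℂ) ^ (k + 2) * (1 / (x * d)) ^ (2 * k + 3) + d * (1 / (x * d)) - 1 = 0) ∧
    ((d : ℂ) / (d + 1)) * (x + 1 / (x * d))
      = ((d : ℂ) / (d + 1)) * ((1 / (x * d)) + 1 / ((1 / (x * d)) * d)) := by
  have hx0 : x ≠ 0 := by rintro rfl; rcases hsol with e | ⟨k, -, e⟩ <;> simp at e
  have hd0 : (d : ℂ) ≠ 0 := by exact_mod_cast (by omega : d ≠ 0)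
  have hxy : (d : ℂ) * x * (1 / (x * d)) = 1 := by field_simp
  set y := 1 / (x * d)
  have hyx : (d : ℂ) * y * x = 1 := by rw [mul_right_comm, hxy]
  have hne : x ≠ y := fun e => natCast_mul_sq_ne_one hx1 hx2 (by rw [← hxy, ← e]; ring)
  refine ⟨?_, fun e => ?_, fun k _ e => ?_, ?_⟩
  · rw [show (d : ℂ) / (d + 1) * (x + y) = d * (x + y) / (d + 1) by ring]
    rcases hsol with e | ⟨k, hk, e⟩
    · exact hasEigenvalue_Q_of_pow_eq_pow hh hxy hne ((pow_eq_pow_iff_of_mul_eq_one hxy h).1 e)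
    · exact hasEigenvalue_Q_of_branch hd hh hxy hne (by omega)
        ((branch_eq_zero_iff_of_mul_eq_one hxy k).1 e)
  · exact (pow_eq_pow_iff_of_mul_eq_one hyx h).2 ((pow_eq_pow_iff_of_mul_eq_one hxy h).1 e).symm
  · have hleaf := (branch_eq_zero_iff_of_mul_eq_one hxy k).1 e
    exact (branch_eq_zero_iff_of_mul_eq_one hyx k).2 (by linear_combination -hleaf)
  · rw [one_div (y * d), inv_eq_of_mul_eq_one_right (by linear_combination hyx), add_comm y]
end

section
/- Let x ∈ ℂ satisfy x ≠ ±1/√d and d^{h+1}x^{2h+2} = 1, and set λ = (d/(d+1))·(x + 1/(xd)). Then the vector f : V(T_h) → ℂ defined by f(v) = ((dx² − x)/(dx² − 1))·x^{ℓ(v)} + ((x − 1)/(dx² − 1))·1/(d^{ℓ(v)} x^{ℓ(v)}) is a nonzero vector satisfying Q_h f = λ f; in particular f is an eigenvector of Q_h with eigenvalue λ. -/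
open Matrix

/-- The completely symmetric candidate eigenvector: its value at a vertex depends only
on the level `i = lvl v` and is given by
`((dx² − x)/(dx² − 1))·xⁱ + ((x − 1)/(dx² − 1))·(dⁱxⁱ)⁻¹`. -/
noncomputable def fsym (d h : ℕ) (x : ℂ) : Vtx d h → ℂ := fun v =>
  ((d * x ^ 2 - x) / (d * x ^ 2 - 1)) * x ^ lvl v
    + ((x - 1) / (d * x ^ 2 - 1)) * (1 / ((d : ℂ) ^ lvl v * x ^ lvl v))

/-! `fsym d h x` is radial: its value at `v` is `G (lvl v)` with `G i = A xⁱ + B (d x)⁻ⁱ`.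
Since a vertex has one parent and `d` children, `(d + 1) Q` acts on radial vectors as
`G i ↦ G (i - 1) + d G (i + 1)` away from the root and the leaves, where the holding
probabilities replace the missing neighbours. Both `xⁱ` and `(d x)⁻ⁱ` solve
`G (i - 1) + d G (i + 1) = (d x + x⁻¹) G i`; the coefficients `A, B` make `G (-1) = G 0 = 1`,
which is the equation at the root, and `dʰ⁺¹x²ʰ⁺² = 1` says `xʰ⁺¹ = (d x)⁻⁽ʰ⁺¹⁾`, which gives
`G (h + 1) = G h`, the equation at the leaves. -/

open scoped Finset

namespace Vtx

variable {d h : ℕ}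

open scoped Classical

lemma lvl_le (v : Vtx d h) : lvl v ≤ h := Nat.lt_succ_iff.mp v.1.isLt

lemma length_toWord (v : Vtx d h) : (toWord v).length = lvl v := by
  simp [toWord, lvl]

lemma toWord_injective : Function.Injective (toWord (d := d) (h := h)) := by
  rintro ⟨l, f⟩ ⟨m, g⟩ hfg
  obtain rfl : l = m := Fin.ext (by simpa [toWord] using congrArg List.length hfg)
  rw [show f = g from List.ofFn_injective hfg]

def child (v : Vtx d h) (hv : lvl v < h) (a : Fin d) : Vtx d h :=
  ⟨⟨lvl v + 1, by omega⟩, Fin.snoc v.2 a⟩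

def parent (v : Vtx d h) : Vtx d h :=
  ⟨⟨lvl v - 1, by have := lvl_le v; omega⟩, fun i => v.2 (Fin.castLE (Nat.sub_le _ _) i)⟩

lemma toWord_child (v : Vtx d h) (hv : lvl v < h) (a : Fin d) :
    toWord (child v hv a) = toWord v ++ [a] := by
  simp only [toWord, child]
  rw [List.ofFn_succ_last]
  simp [lvl]

lemma toWord_eq_toWord_parent_append (v : Vtx d h) (hv : 0 < lvl v) :
    ∃ a, toWord v = toWord (parent v) ++ [a] := by
  obtain ⟨⟨_ | l, hl⟩, f⟩ := v
  · simp [lvl] at hv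
  · exact ⟨f (Fin.last l), List.ofFn_succ_last⟩

def children (v : Vtx d h) : Finset (Vtx d h) :=
  Finset.univ.filter fun w => ∃ a : Fin d, toWord w = toWord v ++ [a]

lemma mem_children {v w : Vtx d h} : w ∈ children v ↔ ∃ a : Fin d, toWord w = toWord v ++ [a] := by
  simp [children]

lemma adj_iff_mem_children (v w : Vtx d h) : adj v w ↔ w ∈ children v ∨ v ∈ children w := by
  simp [adj, mem_children]

lemma lvl_of_mem_children {v w : Vtx d h} (hw : w ∈ children v) : lvl w = lvl v + 1 := by
  obtain ⟨a, ha⟩ := mem_children.mp hw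
  simpa [length_toWord] using congrArg List.length ha

lemma card_children (v : Vtx d h) : #(children v) = if lvl v < h then d else 0 := by
  split_ifs with hv
  · have : children v = Finset.univ.image (child v hv) := by
      ext w
      simp only [mem_children, Finset.mem_image, Finset.mem_univ, true_and, ← toWord_child v hv]
      exact ⟨fun ⟨a, ha⟩ => ⟨a, toWord_injective ha.symm⟩, fun ⟨a, ha⟩ => ⟨a, by rw [ha]⟩⟩
    rw [this, Finset.card_image_of_injective, Finset.card_fin]
    intro a b hab
    simpa [toWord_child] using congrArg toWord hab
  · refine Finset.card_eq_zero.mpr (Finset.eq_empty_of_forall_notMem fun w hw => hv ?_)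
    have := lvl_le w
    rw [lvl_of_mem_children hw] at this
    omega

lemma card_filter_mem_children (v : Vtx d h) :
    #{w | v ∈ children w} = if 0 < lvl v then 1 else 0 := by
  split_ifs with hv
  · refine Finset.card_eq_one.mpr ⟨parent v, Finset.eq_singleton_iff_unique_mem.mpr ⟨?_, ?_⟩⟩
    · simpa [mem_children] using toWord_eq_toWord_parent_append v hv
    · simp only [Finset.mem_filter, Finset.mem_univ, true_and, mem_children]
      rintro w ⟨a, ha⟩
      obtain ⟨b, hb⟩ := toWord_eq_toWord_parent_append v hv
      exact toWord_injective (List.append_inj' (ha.symm.trans hb) rfl).1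
  · refine Finset.card_eq_zero.mpr (Finset.eq_empty_of_forall_notMem fun w hw => hv ?_)
    rw [lvl_of_mem_children (Finset.mem_filter.mp hw).2]
    omega

lemma notMem_children_of_mem_children {v w : Vtx d h} (hw : w ∈ children v) :
    v ∉ children w := fun hv => by
  have := lvl_of_mem_children hv
  rw [lvl_of_mem_children hw] at this
  omega

lemma sum_adj_radial (G : ℕ → ℂ) (v : Vtx d h) :
    ∑ w ∈ {w | adj v w}, G (lvl w)
      = (if 0 < lvl v then G (lvl v - 1) else 0) + (if lvl v < h then d * G (lvl v + 1) else 0) := by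
  have hsplit : ({w | adj v w} : Finset (Vtx d h)) =
      ({w | v ∈ children w} : Finset (Vtx d h)) ∪ children v := by
    ext w
    simp [adj_iff_mem_children, or_comm]
  have hdisj : Disjoint ({w | v ∈ children w} : Finset (Vtx d h)) (children v) :=
    Finset.disjoint_left.mpr fun w hw hvw =>
      notMem_children_of_mem_children hvw (Finset.mem_filter.mp hw).2
  have hparent : ∀ w ∈ ({w | v ∈ children w} : Finset (Vtx d h)), G (lvl w) = G (lvl v - 1) :=
    fun w hw => by rw [lvl_of_mem_children (Finset.mem_filter.mp hw).2, Nat.add_sub_cancel]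
  have hchild : ∀ w ∈ children v, G (lvl w) = G (lvl v + 1) :=
    fun w hw => by rw [lvl_of_mem_children hw]
  rw [hsplit, Finset.sum_union hdisj, Finset.sum_eq_card_nsmul hparent,
    Finset.sum_eq_card_nsmul hchild, card_filter_mem_children, card_children]
  split_ifs <;> simp

end Vtx

section TransitionMatrix

variable {d h : ℕ}

open scoped Classical
open Vtx

lemma Q_apply (v w : Vtx d h) :
    Q d h v w = ((if adj v w then 1 else 0)
      + if w = v then (if lvl v = 0 then 1 else if lvl v = h then (d : ℂ) else 0) else 0) / (d + 1) := by
  by_cases hvw : adj v w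
  · have hne : w ≠ v := by
      rintro rfl
      have := lvl_of_mem_children (((adj_iff_mem_children w w).mp hvw).elim id id)
      omega
    simp [Q, hvw, hne]
  · by_cases hwv : w = v
    · subst hwv
      split_ifs <;> simp_all [Q]
    · simp [Q, hvw, hwv, Ne.symm hwv]

lemma Q_mulVec_radial (G : ℕ → ℂ) (v : Vtx d h) :
    (Q d h *ᵥ fun w => G (lvl w)) v =
      ((if 0 < lvl v then G (lvl v - 1) else 0) + (if lvl v < h then d * G (lvl v + 1) else 0)
        + (if lvl v = 0 then 1 else if lvl v = h then (d : ℂ) else 0) * G (lvl v)) / (d + 1) := by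
  rw [← sum_adj_radial, Finset.sum_filter]
  simp only [mulVec, dotProduct, Q_apply, div_mul_eq_mul_div, ← Finset.sum_div, add_mul,
    Finset.sum_add_distrib, ite_mul, one_mul, zero_mul, Finset.sum_ite_eq', Finset.mem_univ, if_true]

lemma Q_mulVec_radial_eq_smul {G : ℕ → ℂ} {μ : ℂ} (hh : 0 < h)
    (hroot : G 0 + d * G 1 = μ * G 0)
    (hinterior : ∀ i, i + 2 ≤ h → G i + d * G (i + 2) = μ * G (i + 1))
    (hleaf : G (h - 1) + d * G h = μ * G h) :
    (Q d h *ᵥ fun w => G (lvl w)) = (μ / (d + 1)) • fun w => G (lvl w) := by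
  funext v
  rw [Q_mulVec_radial, Pi.smul_apply, smul_eq_mul, div_mul_eq_mul_div]
  congr 1
  obtain ⟨l, hl⟩ : ∃ l, lvl v = l := ⟨_, rfl⟩
  have hlh : l ≤ h := hl ▸ lvl_le v
  rw [hl]
  rcases Nat.eq_zero_or_pos l with rfl | hl0
  · simp [hh, hroot, add_comm]
  · rcases hlh.eq_or_lt with rfl | hlt
    · simp [hl0, hl0.ne', hleaf]
    · obtain ⟨i, rfl⟩ : ∃ i, l = i + 1 := ⟨l - 1, by omega⟩
      simp [hlt, hlt.ne, hinterior i hlt]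

end TransitionMatrix

section LevelProfile

variable {d : ℕ} {x : ℂ}

lemma pow_add_mul_pow_add_two {t μ : ℂ} (ht : d * t ^ 2 - μ * t + 1 = 0) (i : ℕ) :
    t ^ i + d * t ^ (i + 2) = μ * t ^ (i + 1) := by
  linear_combination t ^ i * ht

noncomputable def levelProfile (d : ℕ) (x : ℂ) (i : ℕ) : ℂ :=
  (d * x ^ 2 - x) / (d * x ^ 2 - 1) * x ^ i + (x - 1) / (d * x ^ 2 - 1) * (d * x)⁻¹ ^ i

lemma fsym_eq_levelProfile (h : ℕ) : fsym d h x = fun v => levelProfile d x (lvl v) := by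
  funext v
  simp [fsym, levelProfile, mul_pow]

lemma levelProfile_zero (hD : (d : ℂ) * x ^ 2 - 1 ≠ 0) : levelProfile d x 0 = 1 := by
  rw [levelProfile, pow_zero, pow_zero, mul_one, mul_one, ← add_div, div_eq_one_iff_eq hD]
  ring

lemma levelProfile_add_two (hd : (d : ℂ) ≠ 0) (hx : x ≠ 0) (i : ℕ) :
    levelProfile d x i + d * levelProfile d x (i + 2)
      = (d * x + x⁻¹) * levelProfile d x (i + 1) := by
  have hroot₁ : (d : ℂ) * x ^ 2 - (d * x + x⁻¹) * x + 1 = 0 := by field_simp; ring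
  have hroot₂ : (d : ℂ) * (d * x)⁻¹ ^ 2 - (d * x + x⁻¹) * (d * x)⁻¹ + 1 = 0 := by
    field_simp; ring
  unfold levelProfile
  linear_combination (d * x ^ 2 - x) / (d * x ^ 2 - 1) * pow_add_mul_pow_add_two hroot₁ i
    + (x - 1) / (d * x ^ 2 - 1) * pow_add_mul_pow_add_two hroot₂ i

lemma levelProfile_root (hd : (d : ℂ) ≠ 0) (hx : x ≠ 0) (hD : (d : ℂ) * x ^ 2 - 1 ≠ 0) :
    levelProfile d x 0 + d * levelProfile d x 1 = (d * x + x⁻¹) * levelProfile d x 0 := by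
  unfold levelProfile
  field_simp
  ring

lemma levelProfile_succ (hd : (d : ℂ) ≠ 0) (hx : x ≠ 0) (hD : (d : ℂ) * x ^ 2 - 1 ≠ 0) {k : ℕ}
    (hk : (d : ℂ) ^ (k + 1) * x ^ (2 * k + 2) = 1) :
    levelProfile d x (k + 1) = levelProfile d x k := by
  have hxk : x ^ (k + 1) = (d * x)⁻¹ ^ (k + 1) := by
    rw [inv_pow]
    exact eq_inv_of_mul_eq_one_left (by rw [← hk]; ring)
  have hx_pow : x ^ k = x ^ (k + 1) * x⁻¹ := by rw [pow_succ, mul_inv_cancel_right₀ hx]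
  have hy_pow : (d * x)⁻¹ ^ k = x ^ (k + 1) * (d * x) := by
    rw [hxk, pow_succ, mul_assoc, inv_mul_cancel₀ (mul_ne_zero hd hx), mul_one]
  unfold levelProfile
  rw [hx_pow, hy_pow, ← hxk]
  field_simp
  ring

end LevelProfile

lemma natCast_mul_sq_sub_one_ne_zero {d : ℕ} {x : ℂ} (hx1 : x ≠ ((Real.sqrt d : ℝ) : ℂ)⁻¹)
    (hx2 : x ≠ -((Real.sqrt d : ℝ) : ℂ)⁻¹) : (d : ℂ) * x ^ 2 - 1 ≠ 0 := by
  set s : ℂ := ((Real.sqrt d : ℝ) : ℂ)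
  have hs : s ^ 2 = d := by
    rw [← Complex.ofReal_pow, Real.sq_sqrt d.cast_nonneg, Complex.ofReal_natCast]
  intro hD
  have hfac : (s * x - 1) * (s * x + 1) = 0 := by linear_combination hD + x ^ 2 * hs
  rcases mul_eq_zero.mp hfac with h | h
  · exact hx1 (eq_inv_of_mul_eq_one_right (sub_eq_zero.mp h))
  · exact hx2 (neg_eq_iff_eq_neg.mp (eq_inv_of_mul_eq_one_right (by linear_combination -h)))

theorem stmt_3_general (d h : ℕ) (x : ℂ)
    (hx1 : x ≠ ((Real.sqrt d : ℝ) : ℂ)⁻¹) (hx2 : x ≠ -((Real.sqrt d : ℝ) : ℂ)⁻¹)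
    (hsol : (d : ℂ) ^ (h + 1) * x ^ (2 * h + 2) = 1) :
    fsym d h x ≠ 0 ∧
    (Q d h).mulVec (fsym d h x)
      = (((d : ℂ) / (d + 1)) * (x + 1 / (x * d))) • fsym d h x := by
  have hd : (d : ℂ) ≠ 0 := by rintro hd; simp [hd] at hsol
  have hx : x ≠ 0 := by rintro rfl; simp at hsol
  have hD := natCast_mul_sq_sub_one_ne_zero hx1 hx2
  obtain ⟨k, rfl⟩ : ∃ k, h = k + 1 :=
    Nat.exists_eq_succ_of_ne_zero fun h0 => hD (by subst h0; linear_combination hsol)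
  have heig : (d : ℂ) / (d + 1) * (x + 1 / (x * d)) = (d * x + x⁻¹) / (d + 1) := by
    field_simp
  have hleaf := levelProfile_add_two hd hx k
  rw [levelProfile_succ hd hx hD hsol] at hleaf
  rw [fsym_eq_levelProfile, heig]
  refine ⟨fun h0 => ?_, Q_mulVec_radial_eq_smul k.succ_pos (levelProfile_root hd hx hD)
    (fun i _ => levelProfile_add_two hd hx i) hleaf⟩
  simpa [lvl, levelProfile_zero hD] using congrFun h0 ⟨0, Fin.elim0⟩

/-- For x ≠ ±1/√d with dʰ⁺¹x²ʰ⁺² = 1, the vector `fsym d h x` is a nonzero vector with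
`Q f = λ f` where λ = (d/(d+1))(x + 1/(xd)); i.e. it is an eigenvector of `Q d h`. -/
theorem stmt_3 (d h : ℕ) (hd : 2 ≤ d) (hh : 1 ≤ h) (x : ℂ)
    (hx1 : x ≠ ((Real.sqrt d : ℝ) : ℂ)⁻¹) (hx2 : x ≠ -((Real.sqrt d : ℝ) : ℂ)⁻¹)
    (hsol : (d : ℂ) ^ (h + 1) * x ^ (2 * h + 2) = 1) :
    fsym d h x ≠ 0 ∧
    (Q d h).mulVec (fsym d h x)
      = (((d : ℂ) / (d + 1)) * (x + 1 / (x * d))) • fsym d h x :=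
  stmt_3_general d h x hx1 hx2 hsol
end

section
/- For every eigenvalue λ of Q_h, the eigenspace E(λ) = ker(Q_h − λI) contains a nonzero vector f that is either completely symmetric, or pseudo anti-symmetric. -/
open Matrix

/-- A vector on the tree is completely symmetric if its value depends only on the level. -/
def CompletelySymmetric {d h : ℕ} (f : Vtx d h → ℂ) : Prop :=
  ∀ v w : Vtx d h, lvl v = lvl w → f v = f w

/-- A vector on the tree is pseudo anti-symmetric if there are a non-leaf vertex v and
distinct children i ≠ j such that f vanishes outside T_i^v ∪ T_j^v, f is constant on
each level of T_i^v and of T_j^v, and f takes opposite values at same-level vertices of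
T_i^v and T_j^v. -/
def PseudoAntiSymmetric {d h : ℕ} (f : Vtx d h → ℂ) : Prop :=
  ∃ (v : Vtx d h) (_ : lvl v < h) (i j : Fin d), i ≠ j ∧
    (∀ w, ¬ inSub v i w → ¬ inSub v j w → f w = 0) ∧
    (∀ w w', inSub v i w → inSub v i w' → lvl w = lvl w' → f w = f w') ∧
    (∀ w w', inSub v j w → inSub v j w' → lvl w = lvl w' → f w = f w') ∧
    (∀ w w', inSub v i w → inSub v j w' → lvl w = lvl w' → f w = -f w')


section Infra
variable {d h : ℕ}

/-- The parent of a non-root vertex. -/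
def parent (v : Vtx d h) (hp : 0 < lvl v) : Vtx d h :=
  ⟨⟨v.1.val - 1, by have := v.1.2; omega⟩, fun i => v.2 ⟨i.val, by have h2 : (i : ℕ) < v.1.val - 1 := i.2; omega⟩⟩

/-- The `a`-th child of a non-leaf vertex. -/
def child (v : Vtx d h) (hc : lvl v < h) (a : Fin d) : Vtx d h :=
  ⟨⟨v.1.val + 1, by simp only [lvl] at hc; omega⟩, Fin.snoc v.2 a⟩

lemma lvl_le (v : Vtx d h) : lvl v ≤ h := by
  have := v.1.2; unfold lvl; omega

@[simp] lemma lvl_child (v : Vtx d h) (hc : lvl v < h) (a : Fin d) :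
    lvl (child v hc a) = lvl v + 1 := rfl

@[simp] lemma lvl_parent (v : Vtx d h) (hp : 0 < lvl v) :
    lvl (parent v hp) = lvl v - 1 := rfl

lemma length_toWord (v : Vtx d h) : (toWord v).length = lvl v := by
  simp [toWord, lvl]

lemma toWord_inj : Function.Injective (toWord (d := d) (h := h)) := by
  rintro ⟨l, f⟩ ⟨m, g⟩ hw
  have hl : l = m := by
    have := congrArg List.length hw
    simp only [toWord, List.length_ofFn] at this
    exact Fin.ext this
  subst hl
  simp only [toWord] at hw
  exact Sigma.ext rfl (heq_of_eq (List.ofFn_injective hw))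

lemma toWord_child (v : Vtx d h) (hc : lvl v < h) (a : Fin d) :
    toWord (child v hc a) = toWord v ++ [a] := by
  simp only [toWord, child]
  rw [List.ofFn_succ']
  simp [List.concat_eq_append]

lemma toWord_parent (v : Vtx d h) (hp : 0 < lvl v) :
    toWord v = toWord (parent v hp) ++ [v.2 ⟨lvl v - 1, by simp only [lvl] at hp ⊢; omega⟩] := by
  have hlv : (toWord v).length = lvl v := length_toWord v
  have hlp : (toWord (parent v hp)).length = lvl v - 1 := by
    rw [length_toWord, lvl_parent]
  apply List.ext_getElem
  · simp only [List.length_append, List.length_cons, List.length_nil, hlv, hlp]; omega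
  intro i h1 h2
  rw [List.getElem_append]
  split
  · rename_i h3
    simp only [toWord, List.getElem_ofFn, parent]
  · rename_i h3
    rw [List.getElem_singleton]
    rw [hlp] at h3
    rw [hlv] at h1
    have hi : i = lvl v - 1 := by omega
    subst hi
    simp only [toWord, List.getElem_ofFn]

lemma parent_child (v : Vtx d h) (hc : lvl v < h) (a : Fin d)
    (hp : 0 < lvl (child v hc a)) : parent (child v hc a) hp = v := by
  apply toWord_inj
  have h1 := toWord_parent (child v hc a) hp
  rw [toWord_child] at h1
  have h2 := List.append_inj' h1.symm rfl
  exact h2.1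

lemma eq_child_parent (v : Vtx d h) (hp : 0 < lvl v) :
    v = child (parent v hp) (by have := lvl_le v; simp only [lvl_parent]; omega)
      (v.2 ⟨lvl v - 1, by simp only [lvl] at hp ⊢; omega⟩) := by
  apply toWord_inj
  rw [toWord_child]
  exact toWord_parent v hp

end Infra

section Adj
variable {d h : ℕ}

lemma adj_iff {v w : Vtx d h} :
    adj v w ↔ (∃ (hc : lvl v < h) (a : Fin d), w = child v hc a) ∨
      (∃ (hc : lvl w < h) (a : Fin d), v = child w hc a) := by
  constructor
  · rintro (⟨a, ha⟩ | ⟨a, ha⟩)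
    · left
      have hlw : lvl w = lvl v + 1 := by
        have := congrArg List.length ha
        simpa [length_toWord] using this
      have hc : lvl v < h := by have := lvl_le w; omega
      exact ⟨hc, a, toWord_inj (by rw [toWord_child]; exact ha)⟩
    · right
      have hlv : lvl v = lvl w + 1 := by
        have := congrArg List.length ha
        simpa [length_toWord] using this
      have hc : lvl w < h := by have := lvl_le v; omega
      exact ⟨hc, a, toWord_inj (by rw [toWord_child]; exact ha)⟩
  · rintro (⟨hc, a, rfl⟩ | ⟨hc, a, rfl⟩)
    · exact Or.inl ⟨a, toWord_child v hc a⟩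
    · exact Or.inr ⟨a, toWord_child w hc a⟩

lemma not_adj_self (v : Vtx d h) : ¬ adj v v := by
  rintro (⟨a, ha⟩ | ⟨a, ha⟩) <;>
  · have := congrArg List.length ha
    simp at this

lemma ne_of_lvl_ne {v w : Vtx d h} (hne : lvl v ≠ lvl w) : v ≠ w := fun e => hne (by rw [e])

lemma child_inj (v : Vtx d h) (hc : lvl v < h) : Function.Injective (child v hc) := by
  intro a b hab
  have := congrArg toWord hab
  rw [toWord_child, toWord_child] at this
  simpa using this

/-- prefix of toWord -/
lemma inSub_trans_child {v : Vtx d h} {c : Fin d} {w : Vtx d h} (hw : inSub v c w)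
    (hc : lvl w < h) (a : Fin d) : inSub v c (child w hc a) := by
  unfold inSub at *
  rw [toWord_child]
  exact hw.trans (List.prefix_append _ _)

lemma lvl_lt_of_inSub {v : Vtx d h} {c : Fin d} {w : Vtx d h} (hw : inSub v c w) :
    lvl v < lvl w := by
  have := hw.length_le
  simp [length_toWord] at this
  omega

lemma not_inSub_self (v : Vtx d h) (c : Fin d) : ¬ inSub v c v := fun hw =>
  lt_irrefl _ (lvl_lt_of_inSub hw)

lemma inSub_parent {v : Vtx d h} {c : Fin d} {w : Vtx d h} (hp : 0 < lvl w)
    (hw : inSub v c (parent w hp)) : inSub v c w := by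
  unfold inSub at *
  exact hw.trans ⟨_, (toWord_parent w hp).symm⟩

lemma inSub_child_self (v : Vtx d h) (hc : lvl v < h) (c : Fin d) :
    inSub v c (child v hc c) := by
  unfold inSub
  rw [toWord_child]

lemma eq_child_of_inSub_lvl {v : Vtx d h} {c : Fin d} {w : Vtx d h} (hw : inSub v c w)
    (hl : lvl w = lvl v + 1) : ∃ hc : lvl v < h, w = child v hc c := by
  have hc : lvl v < h := by have := lvl_le w; omega
  refine ⟨hc, ?_⟩
  apply toWord_inj
  symm
  rw [toWord_child]
  exact hw.eq_of_length (by simp [length_toWord, hl])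

lemma inSub_parent_of_inSub {v : Vtx d h} {c : Fin d} {w : Vtx d h} (hw : inSub v c w)
    (hp : 0 < lvl w) (hl : lvl w ≠ lvl v + 1) : inSub v c (parent w hp) := by
  unfold inSub at *
  have hle := hw.length_le
  simp only [length_toWord, List.length_append, List.length_cons, List.length_nil] at hle
  apply List.prefix_of_prefix_length_le hw ⟨_, (toWord_parent w hp).symm⟩
  simp only [length_toWord, List.length_append, List.length_cons, List.length_nil, lvl_parent]
  omega

lemma inSub_child_iff {v : Vtx d h} {c : Fin d} {w : Vtx d h} {hc : lvl w < h} {a : Fin d} :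
    inSub v c (child w hc a) ↔ (w = v ∧ a = c) ∨ inSub v c w := by
  constructor
  · intro hw
    unfold inSub at hw
    rw [toWord_child] at hw
    rcases Nat.lt_or_ge (lvl v) (lvl w) with hl | hl
    · right
      unfold inSub
      apply List.prefix_of_prefix_length_le hw (List.prefix_append _ _)
      simp only [length_toWord, List.length_append, List.length_cons, List.length_nil]
      omega
    · have hlen : (toWord v ++ [c]).length = (toWord w ++ [a]).length := by
        have := hw.length_le
        simp only [length_toWord, List.length_append, List.length_cons, List.length_nil] at *
        omega
      have heq := hw.eq_of_length hlen
      have h2 := List.append_inj' heq rfl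
      left
      refine ⟨(toWord_inj h2.1).symm, ?_⟩
      simpa using h2.2.symm
  · rintro (⟨rfl, rfl⟩ | hw)
    · exact inSub_child_self w hc a
    · exact inSub_trans_child hw hc a

lemma inSub_unique {v : Vtx d h} {c c' : Fin d} {w : Vtx d h} (h1 : inSub v c w)
    (h2 : inSub v c' w) : c = c' := by
  unfold inSub at *
  have := List.prefix_of_prefix_length_le h1 h2 (by simp)
  have heq := this.eq_of_length (by simp)
  simpa using (List.append_inj' heq rfl).2

lemma exists_inSub_of_prefix {v w : Vtx d h} (hpre : toWord v <+: toWord w)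
    (hl : lvl v < lvl w) : ∃ a, inSub v a w := by
  obtain ⟨r, hr⟩ := hpre
  match r, hr with
  | [], hr => 
    have := congrArg List.length hr
    simp [length_toWord] at this
    omega
  | (a :: r'), hr =>
    exact ⟨a, r', by rw [← hr]; simp⟩

end Adj

section QLemmas
variable {d h : ℕ}

lemma Q_child (v : Vtx d h) (hc : lvl v < h) (a : Fin d) :
    Q d h v (child v hc a) = 1 / (d + 1) := by
  have : adj v (child v hc a) := adj_iff.2 (Or.inl ⟨hc, a, rfl⟩)
  simp [Q, this]

lemma Q_parent (v : Vtx d h) (hp : 0 < lvl v) :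
    Q d h v (parent v hp) = 1 / (d + 1) := by
  have hc : lvl (parent v hp) < h := by
    have := lvl_le v; simp only [lvl_parent]; omega
  have : adj v (parent v hp) := adj_iff.2 (Or.inr ⟨hc, _, eq_child_parent v hp⟩)
  simp [Q, this]

lemma Q_self (v : Vtx d h) :
    Q d h v v = if lvl v = 0 then (1 : ℂ) / ((d : ℂ) + 1) else if lvl v = h then (d : ℂ) / ((d : ℂ) + 1) else 0 := by
  have hna := not_adj_self v
  by_cases h0 : lvl v = 0 <;> by_cases hH : lvl v = h <;> simp [Q, hna, h0, hH]

lemma Q_eq_zero {v w : Vtx d h} (hne : w ≠ v)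
    (hnc : ∀ (hc : lvl v < h) (a : Fin d), w ≠ child v hc a)
    (hnp : ∀ (hp : 0 < lvl v), w ≠ parent v hp) : Q d h v w = 0 := by
  have hna : ¬ adj v w := by
    intro hadj
    rcases adj_iff.1 hadj with ⟨hc, a, rfl⟩ | ⟨hc, a, hva⟩
    · exact hnc hc a rfl
    · have hp : 0 < lvl v := by rw [hva]; simp
      apply hnp hp
      subst hva
      rw [parent_child]
  have : v ≠ w := fun e => hne e.symm
  simp [Q, hna, this]

/-- The key formula for `mulVec` of `Q`. Requires `1 ≤ h`. -/
lemma mulVec_Q (hh : 1 ≤ h) (f : Vtx d h → ℂ) (v : Vtx d h) :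
    (Q d h).mulVec f v =
      ((if hp : 0 < lvl v then f (parent v hp) else f v)
        + (if hc : lvl v < h then ∑ a : Fin d, f (child v hc a) else (d : ℂ) * f v)) / (d + 1) := by
  classical
  rw [show (Q d h).mulVec f v = ∑ w : Vtx d h, Q d h v w * f w from rfl]
  by_cases hp : 0 < lvl v <;> by_cases hc : lvl v < h
  · -- middle vertex
    rw [← Finset.sum_subset (Finset.subset_univ
        (insert v (insert (parent v hp) (Finset.image (child v hc) Finset.univ)))) ?_]
    · rw [Finset.sum_insert ?_, Finset.sum_insert ?_, Finset.sum_image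
        (fun a _ b _ hab => child_inj v hc hab)]
      · rw [Q_self, Q_parent]
        simp only [dif_pos hp, dif_pos hc]
        have h0 : ¬ lvl v = 0 := by omega
        have hH : ¬ lvl v = h := by omega
        rw [if_neg h0, if_neg hH]
        have : ∀ a : Fin d, Q d h v (child v hc a) * f (child v hc a)
            = f (child v hc a) / (d+1) := by
          intro a; rw [Q_child]; ring
        rw [Finset.sum_congr rfl (fun a _ => this a)]
        rw [← Finset.sum_div]
        ring
      · -- parent ∉ image child
        intro hmem
        obtain ⟨a, -, ha⟩ := Finset.mem_image.1 hmem
        exact ne_of_lvl_ne (by simp only [lvl_child, lvl_parent]; omega) ha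
      · -- v ∉ insert parent image
        intro hmem
        rcases Finset.mem_insert.1 hmem with hv | hv
        · exact ne_of_lvl_ne (by simp only [lvl_parent]; omega) hv
        · obtain ⟨a, -, ha⟩ := Finset.mem_image.1 hv
          exact ne_of_lvl_ne (by simp only [lvl_child]; omega) ha
    · intro w _ hw
      simp only [Finset.mem_insert, Finset.mem_image, not_or] at hw
      refine mul_eq_zero_of_left (Q_eq_zero hw.1 (fun _ a ha => ?_) (fun _ => hw.2.1)) _
      exact hw.2.2 ⟨a, Finset.mem_univ a, ha.symm⟩
  · -- leaf
    have hH : lvl v = h := by have := lvl_le v; omega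
    rw [← Finset.sum_subset (Finset.subset_univ (insert v {parent v hp})) ?_]
    · rw [Finset.sum_insert ?_, Finset.sum_singleton]
      · rw [Q_self, Q_parent]
        have h0 : ¬ lvl v = 0 := by omega
        rw [if_neg h0, if_pos hH]
        simp only [dif_pos hp, dif_neg hc]
        ring
      · simp only [Finset.mem_singleton]
        apply ne_of_lvl_ne; simp only [lvl_parent]; omega
    · intro w _ hw
      simp only [Finset.mem_insert, Finset.mem_singleton, not_or] at hw
      rw [Q_eq_zero hw.1 (fun hc' _ => absurd hc' hc) (fun _ => hw.2), zero_mul]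
  · -- root
    have h0 : lvl v = 0 := by omega
    rw [← Finset.sum_subset (Finset.subset_univ
        (insert v (Finset.image (child v hc) Finset.univ))) ?_]
    · rw [Finset.sum_insert ?_, Finset.sum_image (fun a _ b _ hab => child_inj v hc hab)]
      · rw [Q_self, if_pos h0]
        simp only [dif_neg hp, dif_pos hc]
        have : ∀ a : Fin d, Q d h v (child v hc a) * f (child v hc a)
            = f (child v hc a) / (d+1) := by
          intro a; rw [Q_child]; ring
        rw [Finset.sum_congr rfl (fun a _ => this a)]
        rw [← Finset.sum_div]
        ring
      · intro hmem
        obtain ⟨a, -, ha⟩ := Finset.mem_image.1 hmem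
        exact ne_of_lvl_ne (by simp only [lvl_child]; omega) ha
    · intro w _ hw
      simp only [Finset.mem_insert, Finset.mem_image, not_or] at hw
      refine mul_eq_zero_of_left (Q_eq_zero hw.1 (fun _ a ha => ?_)
        (fun hp' => absurd hp' hp)) _
      exact hw.2 ⟨a, Finset.mem_univ a, ha.symm⟩
  · -- impossible: lvl v = 0 and lvl v = h with h ≥ 1
    have := lvl_le v
    omega

end QLemmas

section Subs
variable {d h : ℕ}

/-- The submodule of completely symmetric vectors. -/
noncomputable def csSub (d h : ℕ) : Submodule ℂ (Vtx d h → ℂ) where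
  carrier := {f | CompletelySymmetric f}
  add_mem' := fun hf hg v w hl => by
    simp only [Pi.add_apply, hf v w hl, hg v w hl]
  zero_mem' := fun v w _ => rfl
  smul_mem' := fun c f hf v w hl => by
    simp only [Pi.smul_apply, hf v w hl]

/-- The submodule of vectors supported on `T_i^v ∪ T_j^v`, constant on levels of each,
with opposite values. -/
noncomputable def pasSub (v : Vtx d h) (i j : Fin d) : Submodule ℂ (Vtx d h → ℂ) where
  carrier := {f |
    (∀ w, ¬ inSub v i w → ¬ inSub v j w → f w = 0) ∧
    (∀ w w', inSub v i w → inSub v i w' → lvl w = lvl w' → f w = f w') ∧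
    (∀ w w', inSub v j w → inSub v j w' → lvl w = lvl w' → f w = f w') ∧
    (∀ w w', inSub v i w → inSub v j w' → lvl w = lvl w' → f w = -f w')}
  add_mem' := by
    rintro f g ⟨f1, f2, f3, f4⟩ ⟨g1, g2, g3, g4⟩
    refine ⟨fun w h1 h2 => ?_, fun w w' h1 h2 h3 => ?_, fun w w' h1 h2 h3 => ?_,
      fun w w' h1 h2 h3 => ?_⟩ <;> simp only [Pi.add_apply]
    · rw [f1 w h1 h2, g1 w h1 h2, add_zero]
    · rw [f2 w w' h1 h2 h3, g2 w w' h1 h2 h3]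
    · rw [f3 w w' h1 h2 h3, g3 w w' h1 h2 h3]
    · rw [f4 w w' h1 h2 h3, g4 w w' h1 h2 h3]; ring
  zero_mem' := by
    refine ⟨fun _ _ _ => rfl, fun _ _ _ _ _ => rfl, fun _ _ _ _ _ => rfl,
      fun _ _ _ _ _ => ?_⟩
    simp
  smul_mem' := by
    rintro c f ⟨f1, f2, f3, f4⟩
    refine ⟨fun w h1 h2 => ?_, fun w w' h1 h2 h3 => ?_, fun w w' h1 h2 h3 => ?_,
      fun w w' h1 h2 h3 => ?_⟩ <;> simp only [Pi.smul_apply, smul_eq_mul]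
    · rw [f1 w h1 h2, mul_zero]
    · rw [f2 w w' h1 h2 h3]
    · rw [f3 w w' h1 h2 h3]
    · rw [f4 w w' h1 h2 h3]; ring

lemma pas_of_mem_pasSub {v : Vtx d h} {i j : Fin d} (hv : lvl v < h) (hij : i ≠ j)
    {f : Vtx d h → ℂ} (hf : f ∈ pasSub v i j) : PseudoAntiSymmetric f :=
  ⟨v, hv, i, j, hij, hf.1, hf.2.1, hf.2.2.1, hf.2.2.2⟩

/-- Invariance of the completely symmetric subspace. -/
lemma cs_invariant (hh : 1 ≤ h) {f : Vtx d h → ℂ} (hf : f ∈ csSub d h) :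
    (Q d h).mulVec f ∈ csSub d h := by
  intro v w hl
  rw [mulVec_Q hh, mulVec_Q hh]
  congr 1
  congr 1
  · by_cases hp : 0 < lvl v
    · rw [dif_pos hp, dif_pos (show 0 < lvl w by omega)]
      exact hf _ _ (by simp only [lvl_parent]; omega)
    · rw [dif_neg hp, dif_neg (show ¬ 0 < lvl w by omega)]
      exact hf _ _ hl
  · by_cases hc : lvl v < h
    · rw [dif_pos hc, dif_pos (show lvl w < h by omega)]
      exact Finset.sum_congr rfl fun a _ => hf _ _ (by simp only [lvl_child]; omega)
    · rw [dif_neg hc, dif_neg (show ¬ lvl w < h by omega)]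
      rw [hf v w hl]

/-- Invariance of the pseudo anti-symmetric subspaces. -/
lemma pas_invariant (hh : 1 ≤ h) {v : Vtx d h} (hv : lvl v < h) {i j : Fin d} (hij : i ≠ j)
    {f : Vtx d h → ℂ} (hf : f ∈ pasSub v i j) :
    (Q d h).mulVec f ∈ pasSub v i j := by
  obtain ⟨hz, hi, hj, hop⟩ := hf
  have hfv : f v = 0 := hz v (not_inSub_self v i) (not_inSub_self v j)
  -- general vanishing lemma
  have key0 : ∀ w, ¬ inSub v i w → ¬ inSub v j w → (Q d h).mulVec f w = 0 := by
    intro w h1 h2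
    rw [mulVec_Q hh]
    by_cases hwv : w = v
    · subst hwv
      have hA : (if hp : 0 < lvl w then f (parent w hp) else f w) = 0 := by
        by_cases hp : 0 < lvl w
        · rw [dif_pos hp]
          apply hz
          · intro hin; have := lvl_lt_of_inSub hin; simp only [lvl_parent] at this; omega
          · intro hin; have := lvl_lt_of_inSub hin; simp only [lvl_parent] at this; omega
        · rw [dif_neg hp]; exact hfv
      have hB : (if hc : lvl w < h then ∑ a : Fin d, f (child w hc a)
          else (d : ℂ) * f w) = 0 := by
        rw [dif_pos hv]
        have hsum : ∑ a : Fin d, f (child w hv a)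
            = ∑ a ∈ ({i, j} : Finset (Fin d)), f (child w hv a) := by
          symm
          apply Finset.sum_subset (Finset.subset_univ _)
          intro a _ ha
          simp only [Finset.mem_insert, Finset.mem_singleton, not_or] at ha
          apply hz
          · intro hin
            rcases inSub_child_iff.1 hin with ⟨-, rfl⟩ | hin'
            · exact ha.1 rfl
            · exact not_inSub_self w i hin'
          · intro hin
            rcases inSub_child_iff.1 hin with ⟨-, rfl⟩ | hin'
            · exact ha.2 rfl
            · exact not_inSub_self w j hin'
        rw [hsum, Finset.sum_pair hij]
        rw [hop (child w hv i) (child w hv j) (inSub_child_self w hv i)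
          (inSub_child_self w hv j) (by simp)]
        ring
      rw [hA, hB]
      simp
    · have hA : (if hp : 0 < lvl w then f (parent w hp) else f w) = 0 := by
        by_cases hp : 0 < lvl w
        · rw [dif_pos hp]
          exact hz _ (fun hin => h1 (inSub_parent hp hin)) (fun hin => h2 (inSub_parent hp hin))
        · rw [dif_neg hp]; exact hz w h1 h2
      have hB : (if hc : lvl w < h then ∑ a : Fin d, f (child w hc a)
          else (d : ℂ) * f w) = 0 := by
        by_cases hc : lvl w < h
        · rw [dif_pos hc]
          apply Finset.sum_eq_zero
          intro a _
          apply hz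
          · intro hin
            rcases inSub_child_iff.1 hin with ⟨rfl, -⟩ | hin'
            · exact hwv rfl
            · exact h1 hin'
          · intro hin
            rcases inSub_child_iff.1 hin with ⟨rfl, -⟩ | hin'
            · exact hwv rfl
            · exact h2 hin'
        · rw [dif_neg hc, hz w h1 h2, mul_zero]
      rw [hA, hB]
      simp
  -- parent comparison helper, same subtree
  have hpar : ∀ (c : Fin d) (cc : ∀ w w', inSub v c w → inSub v c w' → lvl w = lvl w' →
        f w = f w') (w w' : Vtx d h), inSub v c w → inSub v c w' → lvl w = lvl w' →
      ∀ (hp : 0 < lvl w) (hp' : 0 < lvl w'), f (parent w hp) = f (parent w' hp') := by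
    intro c cc w w' h1 h2 hl hp hp'
    by_cases hcase : lvl w = lvl v + 1
    · obtain ⟨hc1, rfl⟩ := eq_child_of_inSub_lvl h1 hcase
      obtain ⟨hc2, rfl⟩ := eq_child_of_inSub_lvl h2 (by omega)
      simp only [parent_child]
    · have p1 := inSub_parent_of_inSub h1 hp hcase
      have p2 := inSub_parent_of_inSub h2 hp' (by omega)
      exact cc _ _ p1 p2 (by simp only [lvl_parent]; omega)
  -- parent comparison, cross subtrees
  have hparc : ∀ (w w' : Vtx d h), inSub v i w → inSub v j w' → lvl w = lvl w' →
      ∀ (hp : 0 < lvl w) (hp' : 0 < lvl w'), f (parent w hp) = -f (parent w' hp') := by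
    intro w w' h1 h2 hl hp hp'
    by_cases hcase : lvl w = lvl v + 1
    · obtain ⟨hc1, rfl⟩ := eq_child_of_inSub_lvl h1 hcase
      obtain ⟨hc2, rfl⟩ := eq_child_of_inSub_lvl h2 (by omega)
      simp only [parent_child]; rw [hfv, neg_zero]
    · have p1 := inSub_parent_of_inSub h1 hp hcase
      have p2 := inSub_parent_of_inSub h2 hp' (by omega)
      exact hop _ _ p1 p2 (by simp only [lvl_parent]; omega)
  refine ⟨key0, fun w w' h1 h2 hl => ?_, fun w w' h1 h2 hl => ?_, fun w w' h1 h2 hl => ?_⟩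
  · -- constant on T_i levels
    rw [mulVec_Q hh, mulVec_Q hh]
    have hp : 0 < lvl w := by have := lvl_lt_of_inSub h1; omega
    have hp' : 0 < lvl w' := by omega
    rw [dif_pos hp, dif_pos hp', hpar i hi w w' h1 h2 hl hp hp']
    congr 2
    by_cases hc : lvl w < h
    · rw [dif_pos hc, dif_pos (show lvl w' < h by omega)]
      exact Finset.sum_congr rfl fun a _ => hi _ _ (inSub_trans_child h1 _ a)
        (inSub_trans_child h2 _ a) (by simp only [lvl_child]; omega)
    · rw [dif_neg hc, dif_neg (show ¬ lvl w' < h by omega), hi w w' h1 h2 hl]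
  · -- constant on T_j levels
    rw [mulVec_Q hh, mulVec_Q hh]
    have hp : 0 < lvl w := by have := lvl_lt_of_inSub h1; omega
    have hp' : 0 < lvl w' := by omega
    rw [dif_pos hp, dif_pos hp', hpar j hj w w' h1 h2 hl hp hp']
    congr 2
    by_cases hc : lvl w < h
    · rw [dif_pos hc, dif_pos (show lvl w' < h by omega)]
      exact Finset.sum_congr rfl fun a _ => hj _ _ (inSub_trans_child h1 _ a)
        (inSub_trans_child h2 _ a) (by simp only [lvl_child]; omega)
    · rw [dif_neg hc, dif_neg (show ¬ lvl w' < h by omega), hj w w' h1 h2 hl]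
  · -- opposite values
    rw [mulVec_Q hh, mulVec_Q hh]
    have hp : 0 < lvl w := by have := lvl_lt_of_inSub h1; omega
    have hp' : 0 < lvl w' := by omega
    rw [dif_pos hp, dif_pos hp', hparc w w' h1 h2 hl hp hp']
    have hBeq : (if hc : lvl w < h then ∑ a : Fin d, f (child w hc a) else (d : ℂ) * f w)
        = -(if hc : lvl w' < h then ∑ a : Fin d, f (child w' hc a) else (d : ℂ) * f w') := by
      by_cases hc : lvl w < h
      · rw [dif_pos hc, dif_pos (show lvl w' < h by omega), ← Finset.sum_neg_distrib]
        exact Finset.sum_congr rfl fun a _ => hop _ _ (inSub_trans_child h1 _ a)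
          (inSub_trans_child h2 _ a) (by simp only [lvl_child]; omega)
      · rw [dif_neg hc, dif_neg (show ¬ lvl w' < h by omega), hop w w' h1 h2 hl]
        ring
    rw [hBeq]
    ring

end Subs

section Span
variable {d h : ℕ}

open scoped Classical in
/-- Indicator of the set of level-`m` vertices in the subtree rooted at `v`. -/
noncomputable def Schi (v : Vtx d h) (m : ℕ) : Vtx d h → ℂ := fun w =>
  if toWord v <+: toWord w ∧ lvl w = m then 1 else 0

open scoped Classical in
/-- Family of invariant subspaces. -/
noncomputable def U (d h : ℕ) : Option (Vtx d h × Fin d × Fin d) → Submodule ℂ (Vtx d h → ℂ)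
  | none => csSub d h
  | some (v, i, j) => if lvl v < h ∧ i ≠ j then pasSub v i j else ⊥

lemma csSub_le_iSupU : csSub d h ≤ ⨆ k, U d h k := le_iSup (U d h) none

lemma pasSub_le_iSupU {v : Vtx d h} (hv : lvl v < h) {i j : Fin d} (hij : i ≠ j) :
    pasSub v i j ≤ ⨆ k, U d h k := by
  have : U d h (some (v, i, j)) = pasSub v i j := by
    classical
    simp only [U, if_pos (⟨hv, hij⟩ : lvl v < h ∧ i ≠ j)]
  exact this ▸ le_iSup (U d h) (some (v, i, j))

lemma Schi_root (v : Vtx d h) (h0 : lvl v = 0) (m : ℕ) : Schi v m ∈ csSub d h := by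
  have hnil : toWord v = [] := by
    have := length_toWord v
    rw [h0] at this
    exact List.length_eq_zero_iff.1 this
  intro w w' hl
  simp only [Schi, hnil, List.nil_prefix, true_and, hl]

lemma Schi_lvl (v w : Vtx d h) : Schi v (lvl v) w = if w = v then 1 else 0 := by
  simp only [Schi]
  by_cases hw : w = v
  · subst hw; simp
  · rw [if_neg hw, if_neg]
    rintro ⟨hpre, hlw⟩
    exact hw (toWord_inj (hpre.eq_of_length (by simp [length_toWord, hlw]))).symm

lemma sum_Schi_child (q : Vtx d h) (hq : lvl q < h) (m : ℕ) (hm : lvl q < m) (w : Vtx d h) :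
    ∑ a : Fin d, Schi (child q hq a) m w = Schi q m w := by
  classical
  by_cases hlw : lvl w = m
  · by_cases hpre : toWord q <+: toWord w
    · obtain ⟨a₀, ha₀⟩ := exists_inSub_of_prefix hpre (by omega)
      rw [Finset.sum_eq_single a₀]
      · have hthis : toWord (child q hq a₀) <+: toWord w := by rw [toWord_child]; exact ha₀
        simp only [Schi]
        rw [if_pos ⟨hthis, hlw⟩, if_pos ⟨hpre, hlw⟩]
      · intro b _ hb
        simp only [Schi, ite_eq_right_iff]
        rintro ⟨hpre', -⟩
        rw [toWord_child] at hpre'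
        exact absurd (inSub_unique hpre' ha₀) hb
      · intro hmem; exact absurd (Finset.mem_univ a₀) hmem
    · rw [Finset.sum_eq_zero, eq_comm]
      · simp only [Schi, ite_eq_right_iff]
        rintro ⟨hpre', -⟩; exact absurd hpre' hpre
      · intro b _
        simp only [Schi, ite_eq_right_iff]
        rintro ⟨hpre', -⟩
        rw [toWord_child] at hpre'
        exact absurd ((List.prefix_append (toWord q) [b]).trans hpre') hpre
  · rw [Finset.sum_eq_zero, eq_comm]
    · simp only [Schi, ite_eq_right_iff]
      rintro ⟨-, hl⟩; exact absurd hl hlw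
    · intro b _
      simp only [Schi, ite_eq_right_iff]
      rintro ⟨-, hl⟩; exact absurd hl hlw

lemma Schi_diff_mem (q : Vtx d h) (hq : lvl q < h) {c a : Fin d} (hca : c ≠ a) (m : ℕ) :
    Schi (child q hq c) m - Schi (child q hq a) m ∈ pasSub q c a := by
  classical
  have hiff : ∀ (b : Fin d) (w : Vtx d h),
      (toWord (child q hq b) <+: toWord w) ↔ inSub q b w := by
    intro b w; rw [toWord_child]; rfl
  have hval : ∀ (b : Fin d) (x : Vtx d h), inSub q b x →
      Schi (child q hq b) m x = if lvl x = m then (1 : ℂ) else 0 := by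
    intro b x hx
    simp only [Schi]
    by_cases hm : lvl x = m
    · rw [if_pos ⟨(hiff b x).2 hx, hm⟩, if_pos hm]
    · rw [if_neg (fun e => hm e.2), if_neg hm]
  have hval0 : ∀ (b : Fin d) (x : Vtx d h), ¬ inSub q b x →
      Schi (child q hq b) m x = 0 := by
    intro b x hx
    simp only [Schi]
    exact if_neg (fun e => hx ((hiff b x).1 e.1))
  refine ⟨fun w h1 h2 => ?_, fun w w' h1 h2 hl => ?_, fun w w' h1 h2 hl => ?_,
    fun w w' h1 h2 hl => ?_⟩ <;> simp only [Pi.sub_apply]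
  · rw [hval0 c w h1, hval0 a w h2, sub_zero]
  · have hn : ¬ inSub q a w := fun hx => hca (inSub_unique h1 hx)
    have hn' : ¬ inSub q a w' := fun hx => hca (inSub_unique h2 hx)
    rw [hval0 a w hn, hval0 a w' hn', hval c w h1, hval c w' h2, hl]
  · have hn : ¬ inSub q c w := fun hx => hca (inSub_unique hx h1)
    have hn' : ¬ inSub q c w' := fun hx => hca (inSub_unique hx h2)
    rw [hval0 c w hn, hval0 c w' hn', hval a w h1, hval a w' h2, hl]
  · have hn : ¬ inSub q a w := fun hx => hca (inSub_unique h1 hx)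
    have hn' : ¬ inSub q c w' := fun hx => hca (inSub_unique hx h2)
    rw [hval0 a w hn, hval0 c w' hn', hval c w h1, hval a w' h2, hl]
    ring

lemma Schi_mem (hd : 2 ≤ d) :
    ∀ (n : ℕ) (v : Vtx d h), lvl v = n → ∀ m, lvl v ≤ m → Schi v m ∈ ⨆ k, U d h k := by
  intro n
  induction n using Nat.strong_induction_on with
  | _ n IH =>
    intro v hn m hm
    rcases Nat.eq_zero_or_pos n with h0 | h0
    · exact csSub_le_iSupU (Schi_root v (by omega) m)
    · have hp : 0 < lvl v := by omega
      have hqh : lvl (parent v hp) < h := by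
        have := lvl_le v; simp only [lvl_parent]; omega
      set q := parent v hp with hq
      set c : Fin d := v.2 ⟨lvl v - 1, by simp only [lvl] at hp ⊢; omega⟩ with hc
      have hveq : v = child q hqh c := eq_child_parent v hp
      have hdne : (d : ℂ) ≠ 0 := by
        simp only [ne_eq, Nat.cast_eq_zero]; omega
      have key : (d : ℂ) • Schi v m
          = Schi q m + ∑ a : Fin d, (Schi v m - Schi (child q hqh a) m) := by
        funext w
        simp only [Pi.add_apply, Pi.smul_apply, Finset.sum_apply, Pi.sub_apply]
        simp only [Finset.sum_sub_distrib, Finset.sum_const, Finset.card_univ,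
          Fintype.card_fin, nsmul_eq_mul, smul_eq_mul]
        rw [sum_Schi_child q hqh m (by simp only [hq, lvl_parent]; omega) w]
        ring
      have : Schi v m = (d : ℂ)⁻¹ • ((d : ℂ) • Schi v m) := by
        rw [smul_smul, inv_mul_cancel₀ hdne, one_smul]
      rw [this, key]
      apply Submodule.smul_mem
      apply add_mem
      · exact IH (n - 1) (by omega) q (by simp only [hq, lvl_parent, hn]) m
          (by simp only [hq, lvl_parent]; omega)
      · apply Submodule.sum_mem
        intro a _
        by_cases hac : a = c
        · subst hac
          rw [← hveq, sub_self]
          exact Submodule.zero_mem _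
        · rw [hveq]
          exact pasSub_le_iSupU hqh (fun e => hac e.symm)
            (Schi_diff_mem q hqh (fun e => hac e.symm) m)

lemma iSupU_eq_top (hd : 2 ≤ d) : (⨆ k, U d h k) = ⊤ := by
  classical
  rw [eq_top_iff]
  intro f _
  have hrepr : f = ∑ v : Vtx d h, f v • Schi v (lvl v) := by
    funext w
    simp only [Finset.sum_apply, Pi.smul_apply, smul_eq_mul, Schi_lvl]
    rw [Finset.sum_eq_single w]
    · simp
    · intro b _ hb
      rw [if_neg (fun e => hb e.symm), mul_zero]
    · intro hmem; exact absurd (Finset.mem_univ w) hmem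
  rw [hrepr]
  exact Submodule.sum_mem _ fun v _ =>
    Submodule.smul_mem _ _ (Schi_mem hd (lvl v) v rfl (lvl v) le_rfl)

end Span

section Final
variable {d h : ℕ}

lemma U_invariant (hh : 1 ≤ h) (k : Option (Vtx d h × Fin d × Fin d)) {f : Vtx d h → ℂ}
    (hf : f ∈ U d h k) : (Q d h).mulVec f ∈ U d h k := by
  classical
  match k with
  | none => exact cs_invariant hh hf
  | some (v, i, j) =>
    simp only [U] at hf ⊢
    by_cases hc : lvl v < h ∧ i ≠ j
    · rw [if_pos hc] at hf ⊢
      exact pas_invariant hh hc.1 hc.2 hf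
    · rw [if_neg hc] at hf ⊢
      rw [Submodule.mem_bot] at hf
      rw [hf, Matrix.mulVec_zero]
      exact Submodule.zero_mem _

lemma U_good (k : Option (Vtx d h × Fin d × Fin d)) {f : Vtx d h → ℂ}
    (hf : f ∈ U d h k) (hf0 : f ≠ 0) :
    CompletelySymmetric f ∨ PseudoAntiSymmetric f := by
  classical
  match k with
  | none => exact Or.inl hf
  | some (v, i, j) =>
    simp only [U] at hf
    by_cases hc : lvl v < h ∧ i ≠ j
    · rw [if_pos hc] at hf
      exact Or.inr (pas_of_mem_pasSub hc.1 hc.2 hf)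
    · rw [if_neg hc, Submodule.mem_bot] at hf
      exact absurd hf hf0

end Final

/-- Every eigenspace of `Q d h` contains a nonzero vector that is either completely
symmetric or pseudo anti-symmetric. -/
theorem stmt_6 (d h : ℕ) (hd : 2 ≤ d) (hh : 1 ≤ h) (μ : ℂ)
    (hμ : Module.End.HasEigenvalue (Matrix.toLin' (Q d h)) μ) :
    ∃ f : Vtx d h → ℂ, f ≠ 0 ∧ (Q d h).mulVec f = μ • f ∧
      (CompletelySymmetric f ∨ PseudoAntiSymmetric f) := by
  classical
  set T : (Vtx d h → ℂ) →ₗ[ℂ] (Vtx d h → ℂ) :=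
    Matrix.toLin' (Q d h) - μ • LinearMap.id with hT
  have hTapp : ∀ g : Vtx d h → ℂ, T g = (Q d h).mulVec g - μ • g := by
    intro g
    simp [hT, Matrix.toLin'_apply]
  -- there is some k where T has nontrivial kernel on U k
  have main : ∃ (k : Option (Vtx d h × Fin d × Fin d)) (f : Vtx d h → ℂ),
      f ∈ U d h k ∧ f ≠ 0 ∧ T f = 0 := by
    by_contra hcon
    push_neg at hcon
    -- T is then surjective, hence injective, contradicting the eigenvalue
    have hrange : ∀ k, U d h k ≤ LinearMap.range T := by
      intro k
      have hinv : ∀ x ∈ U d h k, T x ∈ U d h k := by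
        intro x hx
        rw [hTapp]
        exact Submodule.sub_mem _ (U_invariant hh k hx) (Submodule.smul_mem _ _ hx)
      set T' : U d h k →ₗ[ℂ] U d h k := T.restrict hinv with hT'
      have hinj : Function.Injective T' := by
        rw [← LinearMap.ker_eq_bot]
        rw [Submodule.eq_bot_iff]
        rintro ⟨x, hx⟩ hker
        rw [LinearMap.mem_ker] at hker
        have hTx : T x = 0 := by
          have := congrArg Subtype.val hker
          simpa [hT', LinearMap.restrict_apply] using this
        have := hcon k x hx
        simp only [Submodule.mk_eq_zero]
        by_contra hx0
        exact (this hx0) hTx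
      have hsurj : Function.Surjective T' := LinearMap.injective_iff_surjective.1 hinj
      intro y hy
      obtain ⟨x, hxeq⟩ := hsurj ⟨y, hy⟩
      refine ⟨x.1, ?_⟩
      have := congrArg Subtype.val hxeq
      simpa [hT', LinearMap.restrict_apply] using this
    have htop : LinearMap.range T = ⊤ := by
      rw [eq_top_iff, ← iSupU_eq_top hd]
      exact iSup_le hrange
    have hTinj : Function.Injective T :=
      LinearMap.injective_iff_surjective.2 (LinearMap.range_eq_top.1 htop)
    obtain ⟨g, hg⟩ := hμ.exists_hasEigenvector
    have hg0 : g ≠ 0 := hg.right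
    have : T g = 0 := by
      rw [hTapp, ← Matrix.toLin'_apply, hg.apply_eq_smul, sub_self]
    exact hg0 (hTinj (by rw [this, map_zero]))
  obtain ⟨k, f, hfU, hf0, hTf⟩ := main
  refine ⟨f, hf0, ?_, U_good k hfU hf0⟩
  have := hTapp f
  rw [hTf] at this
  exact sub_eq_zero.mp this.symm
end

section
/- Let x ∈ ℂ with x ≠ ±1/√d satisfy d^{k+2}x^{2k+4} − d^{k+2}x^{2k+3} + dx − 1 = 0, and set λ = (d/(d+1))·(x + 1/(dx)). Then the vector y = (y_0, y_1, …, y_k) with y_i = d x^{i+2}/(dx² − 1) − 1/((dx² − 1) d^{i} x^{i}) for 0 ≤ i ≤ k is a nonzero eigenvector of S_k with eigenvalue λ. -/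
open Matrix

/-- The matrix S_k on states {0,…,k}: S(0,1)=d/(d+1), S(l,l−1)=1/(d+1) and
S(l,l+1)=d/(d+1) for 1 ≤ l ≤ k−1, S(k,k−1)=1/(d+1), S(k,k)=d/(d+1); in particular
S(0,0)=0, so S_k is substochastic. -/
noncomputable def Smat (d k : ℕ) : Matrix (Fin (k + 1)) (Fin (k + 1)) ℂ := fun l m =>
  if (m : ℕ) = (l : ℕ) + 1 then (d : ℂ) / (d + 1)
  else if (l : ℕ) = (m : ℕ) + 1 then 1 / (d + 1)
  else if l = m ∧ (l : ℕ) = k then (d : ℂ) / (d + 1)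
  else 0

/-- The polynomial equation d^{k+2}x^{2k+4} − d^{k+2}x^{2k+3} + dx − 1 = 0. -/
def SEq (d k : ℕ) (x : ℂ) : Prop :=
  (d : ℂ) ^ (k + 2) * x ^ (2 * k + 4) - (d : ℂ) ^ (k + 2) * x ^ (2 * k + 3)
    + d * x - 1 = 0

/-- The entry y_i of the candidate eigenvector of S_k. -/
noncomputable def yanti (d : ℕ) (x : ℂ) (i : ℕ) : ℂ :=
  (d : ℂ) * x ^ (i + 2) / (d * x ^ 2 - 1) - 1 / ((d * x ^ 2 - 1) * (d : ℂ) ^ i * x ^ i)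

/-! Up to the factor `1 / (d x² - 1)`, `y_i = d x² · x^i - (d x)^(-i)` is a combination of two
geometric sequences whose ratios `x` and `1 / (d x)` are the roots of `d t² - (d + 1) λ t + 1`,
so it satisfies the interior rows of `S_k y = λ y`. The combination vanishes at `i = -1`, which
gives row `0`, and the equation on `x` is exactly `y_{k+1} = y_k`, which gives row `k`. -/

lemma ofReal_mul_sq_sub_one_ne_zero {r : ℝ} (hr : 0 ≤ r) {x : ℂ}
    (hx1 : x ≠ ((Real.sqrt r : ℝ) : ℂ)⁻¹) (hx2 : x ≠ -((Real.sqrt r : ℝ) : ℂ)⁻¹) :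
    (r : ℂ) * x ^ 2 - 1 ≠ 0 := by
  set c : ℂ := ((Real.sqrt r : ℝ) : ℂ)
  have hc : c ^ 2 = r := by
    rw [← Complex.ofReal_pow, Real.sq_sqrt hr]
  intro h
  have hfac : (c * x - 1) * (c * x + 1) = 0 := by linear_combination h + x ^ 2 * hc
  rcases mul_eq_zero.mp hfac with h' | h'
  · exact hx1 (eq_inv_of_mul_eq_one_right (by linear_combination h'))
  · exact hx2 (neg_eq_iff_eq_neg.mp (eq_inv_of_mul_eq_one_right (by linear_combination -h')))

section Smat

variable {d k : ℕ}

lemma Smat_apply (l m : Fin (k + 1)) :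
    Smat d k l m = (if (m : ℕ) = l + 1 then (d : ℂ) / (d + 1) else 0)
      + (if (m : ℕ) + 1 = l then 1 / ((d : ℂ) + 1) else 0)
      + (if (l : ℕ) = k then if (m : ℕ) = l then (d : ℂ) / (d + 1) else 0 else 0) := by
  simp only [Smat, Fin.ext_iff]
  split_ifs <;> first | omega | ring

lemma Smat_mulVec_apply (y : ℕ → ℂ) (l : Fin (k + 1)) :
    (Smat d k *ᵥ fun i => y i) l =
      (if (l : ℕ) < k then d / (d + 1) * y (l + 1) else 0)
      + (if (l : ℕ) = 0 then 0 else 1 / (d + 1) * y (l - 1))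
      + (if (l : ℕ) = k then d / (d + 1) * y l else 0) := by
  simp only [mulVec, dotProduct, Smat_apply, add_mul, ite_mul, zero_mul]
  rw [Fin.sum_univ_eq_sum_range (fun m =>
    (if m = (l : ℕ) + 1 then (d : ℂ) / (d + 1) * y m else 0)
    + (if m + 1 = (l : ℕ) then 1 / (d + 1) * y m else 0)
    + (if (l : ℕ) = k then if m = l then d / (d + 1) * y m else 0 else 0))]
  obtain ⟨n, hn⟩ := l
  simp only [Finset.sum_add_distrib, Finset.sum_ite_irrel, Finset.sum_const_zero,
    Finset.sum_ite_eq', Finset.mem_range]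
  rcases n with _ | j
  · simp
  · have hjk : j < k := by omega
    simp [hjk, hjk.le]

lemma Smat_mulVec_eq_smul {y : ℕ → ℂ} {μ : ℂ} (h0 : μ * y 0 = d / (d + 1) * y 1)
    (hrec : ∀ i, μ * y (i + 1) = d / (d + 1) * y (i + 2) + 1 / (d + 1) * y i)
    (hk : y (k + 1) = y k) :
    Smat d k *ᵥ (fun i : Fin (k + 1) => y i) = μ • fun i : Fin (k + 1) => y i := by
  funext l
  have hnext : (if (l : ℕ) < k then d / (d + 1) * y (l + 1) else 0)
      + (if (l : ℕ) = k then d / (d + 1) * y l else 0) = (d : ℂ) / (d + 1) * y (l + 1) := by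
    rcases (Nat.lt_succ_iff.mp l.isLt).lt_or_eq with hl | hl
    · simp [hl, hl.ne]
    · simp [hl, hk]
  rw [Smat_mulVec_apply, add_right_comm, hnext, Pi.smul_apply, smul_eq_mul]
  obtain ⟨_ | j, hj⟩ := l
  · simp [h0]
  · simp [hrec]

end Smat

section yanti

variable {d k : ℕ} {x : ℂ}

lemma ne_zero_of_SEq (h : SEq d k x) : x ≠ 0 := by
  rintro rfl
  simp [SEq] at h

lemma yanti_zero (hA : (d : ℂ) * x ^ 2 - 1 ≠ 0) : yanti d x 0 = 1 := by
  unfold yanti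
  field_simp

lemma yanti_recurrence_zero (hd : (d : ℂ) ≠ 0) (hx : x ≠ 0)
    (hA : (d : ℂ) * x ^ 2 - 1 ≠ 0) :
    (d / (d + 1) * (x + 1 / (d * x))) * yanti d x 0 = d / (d + 1) * yanti d x 1 := by
  unfold yanti
  field_simp
  ring

lemma yanti_recurrence_succ (hd : (d : ℂ) ≠ 0) (hx : x ≠ 0)
    (hA : (d : ℂ) * x ^ 2 - 1 ≠ 0) (i : ℕ) :
    (d / (d + 1) * (x + 1 / (d * x))) * yanti d x (i + 1)
      = d / (d + 1) * yanti d x (i + 2) + 1 / (d + 1) * yanti d x i := by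
  unfold yanti
  field_simp
  ring

lemma yanti_succ_eq_of_SEq (hd : (d : ℂ) ≠ 0) (hA : (d : ℂ) * x ^ 2 - 1 ≠ 0)
    (h : SEq d k x) :
    yanti d x (k + 1) = yanti d x k := by
  have hx := ne_zero_of_SEq h
  unfold SEq at h
  unfold yanti
  field_simp
  linear_combination ((d : ℂ) ^ k * x ^ k) * h

end yanti

/-- For x ≠ ±1/√d solving the equation and λ = (d/(d+1))(x + 1/(dx)), the vector
(y_0,…,y_k) with y_i = dx^{i+2}/(dx²−1) − 1/((dx²−1)dⁱxⁱ) is a nonzero eigenvector of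
S_k with eigenvalue λ. -/
theorem stmt_13 (d k : ℕ) (hd : 2 ≤ d) (x : ℂ)
    (hx1 : x ≠ ((Real.sqrt d : ℝ) : ℂ)⁻¹) (hx2 : x ≠ -((Real.sqrt d : ℝ) : ℂ)⁻¹)
    (hsol : SEq d k x) :
    (fun i : Fin (k + 1) => yanti d x (i : ℕ)) ≠ 0 ∧
    (Smat d k).mulVec (fun i : Fin (k + 1) => yanti d x (i : ℕ))
      = (((d : ℂ) / (d + 1)) * (x + 1 / (d * x)))
          • (fun i : Fin (k + 1) => yanti d x (i : ℕ)) := by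
  have hd0 : (d : ℂ) ≠ 0 := by exact_mod_cast (by omega : d ≠ 0)
  have hx := ne_zero_of_SEq hsol
  have hA : (d : ℂ) * x ^ 2 - 1 ≠ 0 := by
    simpa using ofReal_mul_sq_sub_one_ne_zero (Nat.cast_nonneg d) hx1 hx2
  refine ⟨fun h => ?_, Smat_mulVec_eq_smul (yanti_recurrence_zero hd0 hx hA)
    (yanti_recurrence_succ hd0 hx hA) (yanti_succ_eq_of_SEq hd0 hA hsol)⟩
  simpa [yanti_zero hA] using congrFun h 0
end

section
/- There exists a constant h_0 > 0 (depending only on d) such that for every integer k ≥ h_0, the largest real root x of the polynomial d^{k+1}x^{2k+2} − d^{k+1}x^{2k+1} + dx − 1 satisfies 1 − a/d^{k+1} < x < 1 − (d−1)/d^{k+1}, where a = d − 1 + 2(d−1)²(k+1)/d^{k+1}. Moreover, the corresponding value λ = (d/(d+1))·(x + 1/(dx)) satisfies |λ − (1 − (d−1)²/((d+1)·d^{k+1}))| ≤ 2(k+1)/d^{2k}. -/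
/-!
Write `P = d ^ (k + 1)`, `n = 2k + 1` and `f z = d z - 1 - P (1 - z) z ^ n`. Bernoulli's inequality
`z ^ n ≥ 1 - n (1 - z)` makes `f` negative at `1 - a / P` once `P ≫ n a ^ 2`, while its companion
`z ^ n (1 + n (1 - z)) ≤ 1` makes `f` positive from `1 - (d - 1) / P` on. The zero set of `f` is then
closed, nonempty by the intermediate value theorem and bounded above, so it has a greatest element
`x`, which lies between the two points. For `λ` and its claimed approximation `c`, with
`β = (1 - x) P ∈ [d - 1, a]` one has
`(λ - c) (d + 1) x P ^ 2 = (d - 1) (d - 1 - β) P + d β ^ 2 - (d - 1) ^ 2 β`, which is `O(k d ^ 3)`.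
All the smallness conditions follow from `16 d ^ 3 (k + 1) ^ 2 ≤ d ^ (k + 1)`, true for large `k`.
-/

open Filter Set Topology

def rootPoly (P d : ℝ) (n : ℕ) (z : ℝ) : ℝ := P * z ^ (n + 1) - P * z ^ n + d * z - 1

lemma continuous_rootPoly (P d : ℝ) (n : ℕ) : Continuous (rootPoly P d n) := by
  unfold rootPoly; fun_prop

lemma rootPoly_eq (P d : ℝ) (n : ℕ) (z : ℝ) :
    rootPoly P d n z = d * z - 1 - P * (1 - z) * z ^ n := by
  unfold rootPoly; ring

lemma pow_mul_one_add_mul_one_sub_le_one {z : ℝ} (h0 : 0 ≤ z) (h1 : z ≤ 1) (n : ℕ) :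
    z ^ n * (1 + n * (1 - z)) ≤ 1 := by
  have hB := one_add_mul_sub_le_pow (a := 2 - z) (by linarith) n
  rw [show 2 - z - 1 = 1 - z by ring] at hB
  calc z ^ n * (1 + n * (1 - z)) ≤ z ^ n * (2 - z) ^ n := by gcongr
    _ = (1 - (1 - z) ^ 2) ^ n := by rw [← mul_pow]; ring
    _ ≤ 1 := pow_le_one₀ (by nlinarith) (by nlinarith)

lemma rootPoly_one_sub_div_neg {P d a : ℝ} {n : ℕ} (hP : 0 < P) (hd : 0 ≤ d) (ha : 0 ≤ a)
    (haP : a ≤ 2 * P) (h : n * a ^ 2 < (a - (d - 1)) * P) : rootPoly P d n (1 - a / P) < 0 := by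
  have hdiv : a / P ≤ 2 := (div_le_iff₀ hP).mpr (by linarith)
  have hB := one_add_mul_sub_le_pow (a := 1 - a / P) (by linarith) n
  have h' : n * (a / P) * a < a - (d - 1) := by
    rw [show n * (a / P) * a = n * a ^ 2 / P by ring, div_lt_iff₀ hP]; exact h
  rw [rootPoly_eq, sub_sub_cancel, show P * (a / P) = a by field_simp]
  nlinarith [mul_le_mul_of_nonneg_left hB ha, mul_nonneg hd (div_nonneg ha hP.le)]

lemma rootPoly_pos_of_one_sub_div_le {P d : ℝ} {n : ℕ} (hP : 0 < P) (hd : 1 < d)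
    (hdP : d - 1 ≤ P) (h : d * (P + n * (d - 1)) < n * (d - 1) * P) {z : ℝ}
    (hz : 1 - (d - 1) / P ≤ z) : 0 < rootPoly P d n z := by
  rw [rootPoly_eq]
  rcases le_or_gt 1 z with hz1 | hz1
  · nlinarith [mul_nonneg (mul_nonneg hP.le (by linarith : 0 ≤ z - 1))
      (pow_nonneg (by linarith : (0:ℝ) ≤ z) n)]
  set t := (d - 1) / P with ht
  have htP : P * t = d - 1 := mul_div_cancel₀ _ hP.ne'
  have ht1 : t ≤ 1 := (div_le_one hP).mpr hdP
  set σ := 1 - z with hσ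
  have hσ0 : 0 < σ := by linarith
  have hB := pow_mul_one_add_mul_one_sub_le_one (by linarith : 0 ≤ z) hz1.le n
  rw [← hσ] at hB
  -- the map σ ↦ σ / (1 + n σ) is increasing, so its value at σ ≤ t is at most its value at t
  have h1 : P * σ * z ^ n ≤ P * σ / (1 + n * σ) := by
    rw [le_div_iff₀ (by positivity)]; nlinarith [mul_pos hP hσ0]
  have h2 : P * σ / (1 + n * σ) ≤ P * t / (1 + n * t) := by
    rw [div_le_div_iff₀ (by positivity) (by positivity)]; nlinarith [mul_pos hP hσ0]
  have h3 : P * t / (1 + n * t) < d * (1 - t) - 1 := by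
    have h4 : d + d * n * t < n * (d - 1) := by
      rw [show d + d * n * t = d * (P + n * (d - 1)) / P by rw [ht]; field_simp, div_lt_iff₀ hP]
      exact h
    rw [div_lt_iff₀ (by positivity), htP]
    nlinarith [mul_pos (div_pos (by linarith) hP : 0 < t) (sub_pos.mpr h4)]
  nlinarith

lemma abs_lambda_sub_mul_le {P d a x : ℝ} (hd : 1 ≤ d) (hP : 0 < P) (hx : 0 < x)
    (hβ₁ : d - 1 ≤ (1 - x) * P) (hβ₂ : (1 - x) * P ≤ a) (ha : a ≤ d) :
    |d / (d + 1) * (x + 1 / (d * x)) - (1 - (d - 1) ^ 2 / ((d + 1) * P))| * ((d + 1) * x * P ^ 2)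
      ≤ (d - 1) * (a - (d - 1)) * P + d ^ 3 := by
  set β := (1 - x) * P with hβ
  have key : (d / (d + 1) * (x + 1 / (d * x)) - (1 - (d - 1) ^ 2 / ((d + 1) * P)))
      * ((d + 1) * x * P ^ 2) = (d - 1) * (d - 1 - β) * P + d * β ^ 2 - (d - 1) ^ 2 * β := by
    rw [hβ]; field_simp; ring
  rw [← abs_of_pos (by positivity : 0 < (d + 1) * x * P ^ 2), ← abs_mul, key, abs_le]
  have hβ0 : 0 ≤ β := by linarith
  have hβd : β ≤ d := hβ₂.trans ha
  have hc : 0 ≤ (d - 1) * P := mul_nonneg (by linarith) hP.le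
  have hβ2 : d * β ^ 2 ≤ d ^ 3 := by
    rw [pow_succ' d 2]; gcongr
  have hβ3 : (d - 1) ^ 2 * β ≤ d ^ 3 := by
    rw [pow_succ d 2]; gcongr; linarith
  constructor
  · nlinarith [mul_le_mul_of_nonneg_left hβ₂ hc, mul_nonneg (by linarith : 0 ≤ d) (sq_nonneg β)]
  · nlinarith [mul_le_mul_of_nonneg_left hβ₁ hc, mul_le_mul_of_nonneg_left (hβ₁.trans hβ₂) hc,
      mul_nonneg (sq_nonneg (d - 1)) hβ0]

lemma exists_isGreatest_zero_mem_Ioo {f : ℝ → ℝ} (hf : Continuous f) {a b : ℝ}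
    (ha : f a < 0) (hb : ∀ z, b ≤ z → 0 < f z) :
    ∃ x, IsGreatest {z | f z = 0} x ∧ x ∈ Ioo a b := by
  have hab : a < b := not_le.mp fun hba => (hb a hba).not_gt ha
  obtain ⟨r, hr, hfr⟩ := intermediate_value_Ioo hab.le hf.continuousOn ⟨ha, hb b le_rfl⟩
  have hbdd : BddAbove {z | f z = 0} :=
    ⟨b, fun z hz => not_lt.mp fun hbz => (hb z hbz.le).ne' hz⟩
  have hmax := (isClosed_eq hf continuous_const).isGreatest_csSup ⟨r, hfr⟩ hbdd
  refine ⟨_, hmax, hr.1.trans_le (hmax.2 hfr), not_le.mp fun hbx => (hb _ hbx).ne' hmax.1⟩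

lemma eventually_const_mul_sq_le_pow {D C : ℝ} (hD : 1 < D) (hC : 0 < C) :
    ∀ᶠ n : ℕ in atTop, C * (n : ℝ) ^ 2 ≤ D ^ n := by
  filter_upwards [(isLittleO_pow_const_const_pow_of_one_lt (R := ℝ) 2 hD).def (inv_pos.mpr hC)]
    with n hn
  rw [Real.norm_of_nonneg (by positivity), Real.norm_of_nonneg (by positivity)] at hn
  rwa [← le_inv_mul_iff₀ hC]

section

variable {D P : ℝ} {k : ℕ}

lemma mul_correction_le_one (hD : 2 ≤ D) (hP : 16 * D ^ 3 * (k + 1) ^ 2 ≤ P) :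
    8 * D * (k + 1) * (2 * (D - 1) ^ 2 * (k + 1) / P) ≤ 1 := by
  have hP0 : 0 < P := lt_of_lt_of_le (by positivity) hP
  rw [mul_div_assoc', div_le_one hP0]
  have : (D - 1) ^ 2 ≤ D ^ 2 := by gcongr <;> linarith
  nlinarith [mul_le_mul_of_nonneg_left this (by positivity : (0:ℝ) ≤ 16 * D * (k + 1) ^ 2)]

lemma correction_le_one (hD : 2 ≤ D) (hP : 16 * D ^ 3 * (k + 1) ^ 2 ≤ P) :
    2 * (D - 1) ^ 2 * (k + 1) / P ≤ 1 := by
  have h := mul_correction_le_one hD hP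
  have h16 : (16:ℝ) ≤ 8 * D * (k + 1) := by nlinarith [(k.cast_nonneg : (0:ℝ) ≤ k)]
  have hP0 : 0 < P := lt_of_lt_of_le (by positivity) hP
  nlinarith [(by positivity : 0 ≤ 2 * (D - 1) ^ 2 * (k + 1) / P)]

lemma rootPoly_lowerBound_neg (hD : 2 ≤ D) (hP : 16 * D ^ 3 * (k + 1) ^ 2 ≤ P) :
    rootPoly P D (2 * k + 1) (1 - (D - 1 + 2 * (D - 1) ^ 2 * (k + 1) / P) / P) < 0 := by
  have hP0 : 0 < P := lt_of_lt_of_le (by positivity) hP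
  have hτ := mul_correction_le_one hD hP
  set τ := 2 * (D - 1) ^ 2 * (k + 1) / P with hτdef
  have hτP : (D - 1 + τ - (D - 1)) * P = 2 * (D - 1) ^ 2 * (k + 1) := by
    rw [hτdef]; field_simp; ring
  have hτ0 : 0 ≤ τ := by positivity
  have hτ1 : τ ≤ 1 := correction_le_one hD hP
  refine rootPoly_one_sub_div_neg hP0 (by linarith) (by linarith) (by nlinarith) ?_
  rw [hτP]
  push_cast
  nlinarith [mul_nonneg hτ0 (by positivity : (0:ℝ) ≤ k), mul_nonneg hτ0 hτ0]

lemma rootPoly_pos_of_upperBound_le (hD : 2 ≤ D) (hk : 1 ≤ k)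
    (hP : 16 * D ^ 3 * (k + 1) ^ 2 ≤ P) {z : ℝ} (hz : 1 - (D - 1) / P ≤ z) :
    0 < rootPoly P D (2 * k + 1) z := by
  have hk' : (1:ℝ) ≤ k := by exact_mod_cast hk
  have hP' : 2 * D ^ 2 * (k + 1) < P := by
    nlinarith [mul_le_mul_of_nonneg_left (by nlinarith : D * (k + 1) ≥ 4)
      (by positivity : (0:ℝ) ≤ 2 * D ^ 2 * (k + 1))]
  have hP0 : 0 < P := lt_of_le_of_lt (by positivity) hP'
  refine rootPoly_pos_of_one_sub_div_le hP0 (by linarith) (by nlinarith) ?_ hz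
  have hm : D * ((2 * k + 1) * (D - 1)) ≤ 2 * D ^ 2 * (k + 1) := by nlinarith
  push_cast
  nlinarith [mul_le_mul_of_nonneg_left (by nlinarith : (2 * k + 1) * (D - 1) ≥ D + 1) hP0.le]

lemma abs_lambda_sub_le (hD : 2 ≤ D) (hDk : D ≤ k + 1) (hP : 16 * D ^ 3 * (k + 1) ^ 2 ≤ P)
    {x : ℝ} (hxL : 1 - (D - 1 + 2 * (D - 1) ^ 2 * (k + 1) / P) / P < x)
    (hxU : x < 1 - (D - 1) / P) :
    |D / (D + 1) * (x + 1 / (D * x)) - (1 - (D - 1) ^ 2 / ((D + 1) * P))|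
      ≤ 2 * (k + 1) * D ^ 2 / P ^ 2 := by
  have hP0 : 0 < P := lt_of_lt_of_le (by positivity) hP
  set τ := 2 * (D - 1) ^ 2 * (k + 1) / P with hτdef
  have hτP : τ * P = 2 * (D - 1) ^ 2 * (k + 1) := by rw [hτdef]; field_simp
  have hτ0 : 0 ≤ τ := by positivity
  have hτ1 : τ ≤ 1 := correction_le_one hD hP
  have hβ₁ : D - 1 ≤ (1 - x) * P := by
    rw [← div_le_iff₀ hP0]; linarith
  have hβ₂ : (1 - x) * P ≤ D - 1 + τ := by
    rw [← le_div_iff₀ hP0]; linarith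
  have hβD : (1 - x) * P ≤ D := by linarith
  have hPD : 8 * (k + 1) * (D + 1) * D ^ 3 ≤ P := by
    nlinarith [mul_le_mul_of_nonneg_left (by linarith : D + 1 ≤ 2 * (k + 1))
      (by positivity : (0:ℝ) ≤ 8 * (k + 1) * D ^ 3)]
  have hx : 0 < x := by
    by_contra! hx
    nlinarith [mul_le_mul_of_nonneg_right (by linarith : 1 ≤ 1 - x) hP0.le]
  have hx1 : 8 * (k + 1) * (D + 1) * D ^ 2 * (1 - x) ≤ 1 := by
    by_contra! h
    nlinarith [mul_le_mul_of_nonneg_left hβD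
      (by positivity : (0:ℝ) ≤ 8 * (k + 1) * (D + 1) * D ^ 2)]
  have hnum : (D - 1) * (D - 1 + τ - (D - 1)) * P + D ^ 3
      ≤ 2 * (k + 1) * D ^ 2 * ((D + 1) * x) := by
    rw [add_sub_cancel_left, mul_assoc, hτP]
    nlinarith [mul_le_mul_of_nonneg_right hDk (by nlinarith : (0:ℝ) ≤ 4 * D ^ 2 - 3 * D + 1)]
  have h := abs_lambda_sub_mul_le (by linarith) hP0 hx hβ₁ hβ₂ (by linarith)
  rw [le_div_iff₀ (by positivity)]
  refine le_of_mul_le_mul_right ?_ (by positivity : 0 < (D + 1) * x)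
  calc _ = _ := by ring
    _ ≤ _ := h
    _ ≤ _ := hnum

end

/-- For all sufficiently large k, the largest real root x of
d^{k+1}x^{2k+2} − d^{k+1}x^{2k+1} + dx − 1 satisfies
1 − a/d^{k+1} < x < 1 − (d−1)/d^{k+1} where a = d − 1 + 2(d−1)²(k+1)/d^{k+1}, and the
corresponding λ = (d/(d+1))(x + 1/(dx)) satisfies
|λ − (1 − (d−1)²/((d+1)d^{k+1}))| ≤ 2(k+1)/d^{2k}. -/
theorem stmt_17 (d : ℕ) (hd : 2 ≤ d) :
    ∃ h0 : ℕ, 0 < h0 ∧ ∀ k : ℕ, h0 ≤ k → ∃ x : ℝ,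
      ((d : ℝ) ^ (k + 1) * x ^ (2 * k + 2) - (d : ℝ) ^ (k + 1) * x ^ (2 * k + 1)
        + d * x - 1 = 0) ∧
      (∀ z : ℝ, (d : ℝ) ^ (k + 1) * z ^ (2 * k + 2) - (d : ℝ) ^ (k + 1) * z ^ (2 * k + 1)
        + d * z - 1 = 0 → z ≤ x) ∧
      1 - ((d : ℝ) - 1 + 2 * ((d : ℝ) - 1) ^ 2 * ((k : ℝ) + 1) / (d : ℝ) ^ (k + 1))
          / (d : ℝ) ^ (k + 1) < x ∧
      x < 1 - ((d : ℝ) - 1) / (d : ℝ) ^ (k + 1) ∧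
      |(d : ℝ) / ((d : ℝ) + 1) * (x + 1 / ((d : ℝ) * x))
          - (1 - ((d : ℝ) - 1) ^ 2 / (((d : ℝ) + 1) * (d : ℝ) ^ (k + 1)))|
        ≤ 2 * ((k : ℝ) + 1) / (d : ℝ) ^ (2 * k) := by
  have hD : (2 : ℝ) ≤ d := by exact_mod_cast hd
  obtain ⟨N, hN⟩ := eventually_atTop.mp
    ((eventually_const_mul_sq_le_pow (by linarith : (1 : ℝ) < d)
      (by positivity : (0 : ℝ) < 16 * (d : ℝ) ^ 3)).and (eventually_ge_atTop d))
  refine ⟨N + 1, N.succ_pos, fun k hk => ?_⟩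
  obtain ⟨hP, hdk⟩ := hN (k + 1) (by omega)
  push_cast at hP
  replace hdk : (d : ℝ) ≤ k + 1 := by exact_mod_cast hdk
  obtain ⟨x, ⟨hroot, hmax⟩, hxL, hxU⟩ :=
    exists_isGreatest_zero_mem_Ioo (continuous_rootPoly _ _ _) (rootPoly_lowerBound_neg hD hP)
      fun z hz => rootPoly_pos_of_upperBound_le hD (by omega) hP hz
  refine ⟨x, hroot, fun z hz => hmax hz, hxL, hxU, ?_⟩
  calc _ ≤ 2 * ((k : ℝ) + 1) * (d : ℝ) ^ 2 / ((d : ℝ) ^ (k + 1)) ^ 2 :=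
        abs_lambda_sub_le hD hdk hP hxL hxU
    _ = 2 * ((k : ℝ) + 1) / (d : ℝ) ^ (2 * k) := by
        field_simp; ring
end
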